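/- arXiv:2102.12809 — 7 statements merged into one kernel-verified Lean document; each statement's English description precedes it below -/
import Mathlib

section
/- Let Y be a real random variable with distribution function F_Y and quantile function Q_Y(t) = inf{α : F_Y(α) > t}. For each fixed t ∈ (0,1), α = Q_Y(t) minimizes the function α ↦ E[(Y − α)⁺] + α(1 − t) over α ∈ ℝ. -/
open MeasureTheory Set Filter Topology

theorem aux_min {Ω : Type*} [MeasureSpace Ω]
    [IsProbabilityMeasure (volume : Measure Ω)]
    (Y : Ω → ℝ) (hm : Measurable Y) (hY : Integrable Y) (t : ℝ) (ht : t ∈ Ioo (0:ℝ) 1) :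
    ∀ a : ℝ,
      (∫ ω, max (Y ω - sInf {α : ℝ | ((volume : Measure Ω) {ω | Y ω ≤ α}).toReal > t}) 0)
        + (sInf {α : ℝ | ((volume : Measure Ω) {ω | Y ω ≤ α}).toReal > t}) * (1 - t)
      ≤ (∫ ω, max (Y ω - a) 0) + a * (1 - t) := by
  set F : ℝ → ℝ := fun α => ((volume : Measure Ω) {ω | Y ω ≤ α}).toReal with hF
  set S : Set ℝ := {α : ℝ | ((volume : Measure Ω) {ω | Y ω ≤ α}).toReal > t} with hS
  have hmsle : ∀ α : ℝ, MeasurableSet {ω | Y ω ≤ α} := fun α => hm measurableSet_Iic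
  have hFmono : Monotone F := fun α β hab =>
    ENNReal.toReal_mono (measure_ne_top volume _) (measure_mono fun ω h => le_trans h hab)
  -- S nonempty
  have hne : S.Nonempty := by
    have hU : (⋃ n : ℕ, {ω | Y ω ≤ (n : ℝ)}) = univ := by
      ext ω; simp only [mem_iUnion, mem_setOf_eq, mem_univ, iff_true]
      exact exists_nat_ge (Y ω)
    have h1 : Tendsto (fun n : ℕ => (volume : Measure Ω) {ω | Y ω ≤ (n : ℝ)}) atTop (𝓝 1) := by
      have := tendsto_measure_iUnion_atTop (μ := (volume : Measure Ω))
        (s := fun n : ℕ => {ω | Y ω ≤ (n : ℝ)})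
        (fun n k hnk ω (h : Y ω ≤ (n:ℝ)) =>
          show Y ω ≤ (k:ℝ) from le_trans h (Nat.cast_le.mpr hnk))
      rwa [hU, measure_univ] at this
    have h2 : Tendsto (fun n : ℕ => F n) atTop (𝓝 1) := by
      have := (ENNReal.tendsto_toReal (by norm_num : (1 : ENNReal) ≠ ⊤)).comp h1
      exact this
    have h3 : ∀ᶠ n : ℕ in atTop, t < F n :=
      h2.eventually (eventually_gt_nhds ht.2)
    obtain ⟨n, hn⟩ := h3.exists
    exact ⟨n, hn⟩
  -- S bounded below
  have hbdd : BddBelow S := by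
    have hI : (⋂ n : ℕ, {ω | Y ω ≤ -(n : ℝ)}) = ∅ := by
      ext ω; simp only [mem_iInter, mem_setOf_eq, mem_empty_iff_false, iff_false, not_forall,
        not_le]
      obtain ⟨n, hn⟩ := exists_nat_gt (-Y ω)
      exact ⟨n, by linarith⟩
    have h1 : Tendsto (fun n : ℕ => (volume : Measure Ω) {ω | Y ω ≤ -(n : ℝ)}) atTop (𝓝 0) := by
      have := tendsto_measure_iInter_atTop (μ := (volume : Measure Ω))
        (s := fun n : ℕ => {ω | Y ω ≤ -(n : ℝ)})
        (fun n => (hmsle _).nullMeasurableSet)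
        (fun n k hnk ω (h : Y ω ≤ -(k:ℝ)) =>
          show Y ω ≤ -(n:ℝ) from le_trans h (neg_le_neg (Nat.cast_le.mpr hnk)))
        ⟨0, measure_ne_top volume _⟩
      rwa [hI, measure_empty] at this
    have h2 : Tendsto (fun n : ℕ => F (-(n : ℝ))) atTop (𝓝 0) := by
      have := (ENNReal.tendsto_toReal (by norm_num : (0 : ENNReal) ≠ ⊤)).comp h1
      exact this
    have h3 : ∀ᶠ n : ℕ in atTop, F (-(n : ℝ)) < t :=
      h2.eventually (eventually_lt_nhds ht.1)
    obtain ⟨n, hn⟩ := h3.exists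
    refine ⟨-(n : ℝ), fun α hα => ?_⟩
    by_contra h
    push_neg at h
    exact absurd (lt_of_le_of_lt (hFmono h.le) hn) (not_lt.mpr (le_of_lt hα))
  set q : ℝ := sInf S with hq
  -- F q ≥ t (right continuity)
  have hFq : t ≤ F q := by
    have hterm : ∀ n : ℕ, t < F (q + 1 / (n + 1)) := by
      intro n
      have hlt : q < q + 1 / (n + 1) := lt_add_of_pos_right q (by positivity)
      obtain ⟨α, hαS, hα⟩ := exists_lt_of_csInf_lt hne hlt
      exact lt_of_lt_of_le hαS (hFmono hα.le)
    have hIeq : (⋂ n : ℕ, {ω | Y ω ≤ q + 1 / (n + 1)}) = {ω | Y ω ≤ q} := by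
      ext ω
      simp only [mem_iInter, mem_setOf_eq]
      constructor
      · intro h
        by_contra hc
        push_neg at hc
        obtain ⟨n, hn⟩ := exists_nat_one_div_lt (show (0:ℝ) < Y ω - q by linarith)
        exact absurd (h n) (by push_neg; linarith)
      · intro h n
        have : (0:ℝ) < 1 / (n + 1) := by positivity
        linarith
    have h1 : Tendsto (fun n : ℕ => (volume : Measure Ω) {ω | Y ω ≤ q + 1 / (n + 1)}) atTop
        (𝓝 ((volume : Measure Ω) {ω | Y ω ≤ q})) := by
      have := tendsto_measure_iInter_atTop (μ := (volume : Measure Ω))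
        (s := fun n : ℕ => {ω | Y ω ≤ q + 1 / (n + 1)})
        (fun n => (hmsle _).nullMeasurableSet)
        (fun n k hnk ω h => by
          simp only [mem_setOf_eq] at h ⊢
          have : (1:ℝ) / (k + 1) ≤ 1 / (n + 1) := by
            apply one_div_le_one_div_of_le (by positivity)
            exact_mod_cast by exact_mod_cast add_le_add_left (Nat.cast_le.mpr hnk) 1
          linarith)
        ⟨0, measure_ne_top volume _⟩
      rwa [hIeq] at this
    have h2 : Tendsto (fun n : ℕ => F (q + 1 / (n + 1))) atTop (𝓝 (F q)) := by
      have := (ENNReal.tendsto_toReal (measure_ne_top volume _)).comp h1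
      exact this
    exact ge_of_tendsto h2 (Eventually.of_forall fun n => (hterm n).le)
  -- P(Y < q) ≤ t
  have hlt : ((volume : Measure Ω) {ω | Y ω < q}).toReal ≤ t := by
    have hterm : ∀ n : ℕ, F (q - 1 / (n + 1)) ≤ t := by
      intro n
      by_contra h
      push_neg at h
      have hmem : q - 1 / (n + 1) ∈ S := h
      have := csInf_le hbdd hmem
      have hpos : (0:ℝ) < 1 / (n + 1) := by positivity
      linarith [this]
    have hUeq : (⋃ n : ℕ, {ω | Y ω ≤ q - 1 / (n + 1)}) = {ω | Y ω < q} := by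
      ext ω
      simp only [mem_iUnion, mem_setOf_eq]
      constructor
      · rintro ⟨n, hn⟩
        have : (0:ℝ) < 1 / (n + 1) := by positivity
        linarith
      · intro h
        obtain ⟨n, hn⟩ := exists_nat_one_div_lt (show (0:ℝ) < q - Y ω by linarith)
        exact ⟨n, by linarith⟩
    have h1 : Tendsto (fun n : ℕ => (volume : Measure Ω) {ω | Y ω ≤ q - 1 / (n + 1)}) atTop
        (𝓝 ((volume : Measure Ω) {ω | Y ω < q})) := by
      have := tendsto_measure_iUnion_atTop (μ := (volume : Measure Ω))
        (s := fun n : ℕ => {ω | Y ω ≤ q - 1 / (n + 1)})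
        (fun n k hnk ω h => by
          simp only [mem_setOf_eq] at h ⊢
          have : (1:ℝ) / (k + 1) ≤ 1 / (n + 1) := by
            apply one_div_le_one_div_of_le (by positivity)
            exact_mod_cast add_le_add_left (Nat.cast_le.mpr hnk) 1
          linarith)
      rwa [hUeq] at this
    have h2 : Tendsto (fun n : ℕ => F (q - 1 / (n + 1))) atTop
        (𝓝 (((volume : Measure Ω) {ω | Y ω < q}).toReal)) := by
      have := (ENNReal.tendsto_toReal (measure_ne_top volume _)).comp h1
      exact this
    exact le_of_tendsto h2 (Eventually.of_forall hterm)
  -- main part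
  intro a
  have hIq : Integrable (fun ω => max (Y ω - q) 0) := (hY.sub (integrable_const q)).pos_part
  have hIa : Integrable (fun ω => max (Y ω - a) 0) := (hY.sub (integrable_const a)).pos_part
  rcases le_or_gt q a with hqa | hqa
  · -- a ≥ q : use indicator of {q < Y}
    set s : Set Ω := {ω | q < Y ω} with hsdef
    have hs : MeasurableSet s := measurableSet_lt measurable_const hm
    set c : ℝ := a - q with hc
    have hc0 : 0 ≤ c := by simp [hc]; linarith
    have hpt : ∀ ω, max (Y ω - q) 0 ≤ max (Y ω - a) 0 + s.indicator (fun _ => c) ω := by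
      intro ω
      by_cases hω : ω ∈ s
      · rw [indicator_of_mem hω]
        refine max_le ?_ ?_
        · have := le_max_left (Y ω - a) 0; linarith
        · have := le_max_right (Y ω - a) 0; linarith
      · rw [indicator_of_notMem hω]
        simp only [hsdef, mem_setOf_eq, not_lt] at hω
        refine max_le ?_ ?_
        · have := le_max_right (Y ω - a) 0; linarith
        · have := le_max_right (Y ω - a) 0; linarith
    have hind : Integrable (s.indicator fun _ : Ω => c) := (integrable_const c).indicator hs
    have hint : (∫ ω, max (Y ω - q) 0)
        ≤ ∫ ω, (max (Y ω - a) 0 + s.indicator (fun _ => c) ω) :=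
      integral_mono hIq (hIa.add hind) hpt
    rw [integral_add hIa hind, integral_indicator_const c hs] at hint
    have hcompl : s = {ω | Y ω ≤ q}ᶜ := by ext ω; simp [hsdef, not_le]
    have hμs : ((volume : Measure Ω) s).toReal = 1 - F q := by
      rw [hcompl, prob_compl_eq_one_sub (hmsle q),
        ENNReal.toReal_sub_of_le prob_le_one ENNReal.one_ne_top]
      simp [hF]
    rw [measureReal_def, hμs, smul_eq_mul] at hint
    have hmul : (1 - F q) * c ≤ (1 - t) * c :=
      mul_le_mul_of_nonneg_right (by linarith) hc0
    have hcc : (1 - t) * c = a * (1 - t) - q * (1 - t) := by rw [hc]; ring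
    linarith [hint, hmul]
  · -- a < q : use indicator of {q ≤ Y}
    set s : Set Ω := {ω | q ≤ Y ω} with hsdef
    have hs : MeasurableSet s := measurableSet_le measurable_const hm
    set c : ℝ := a - q with hc
    have hc0 : c ≤ 0 := by simp [hc]; linarith
    have hpt : ∀ ω, max (Y ω - q) 0 ≤ max (Y ω - a) 0 + s.indicator (fun _ => c) ω := by
      intro ω
      by_cases hω : ω ∈ s
      · rw [indicator_of_mem hω]
        have hωq : q ≤ Y ω := hω
        have hmax : Y ω - a ≤ max (Y ω - a) 0 := le_max_left _ _
        refine max_le (by linarith) (by linarith)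
      · rw [indicator_of_notMem hω]
        simp only [hsdef, mem_setOf_eq, not_le] at hω
        refine max_le ?_ ?_
        · have := le_max_right (Y ω - a) 0; linarith
        · have := le_max_right (Y ω - a) 0; linarith
    have hind : Integrable (s.indicator fun _ : Ω => c) := (integrable_const c).indicator hs
    have hint : (∫ ω, max (Y ω - q) 0)
        ≤ ∫ ω, (max (Y ω - a) 0 + s.indicator (fun _ => c) ω) :=
      integral_mono hIq (hIa.add hind) hpt
    rw [integral_add hIa hind, integral_indicator_const c hs] at hint
    have hcompl : s = {ω | Y ω < q}ᶜ := by ext ω; simp [hsdef, not_lt]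
    have hms : MeasurableSet {ω | Y ω < q} := measurableSet_lt hm measurable_const
    have hμs : ((volume : Measure Ω) s).toReal = 1 - ((volume : Measure Ω) {ω | Y ω < q}).toReal := by
      rw [hcompl, prob_compl_eq_one_sub hms,
        ENNReal.toReal_sub_of_le prob_le_one ENNReal.one_ne_top]
      simp
    rw [measureReal_def, hμs, smul_eq_mul] at hint
    have hmul : (1 - ((volume : Measure Ω) {ω | Y ω < q}).toReal) * c ≤ (1 - t) * c :=
      mul_le_mul_of_nonpos_right (by linarith) hc0
    have hcc : (1 - t) * c = a * (1 - t) - q * (1 - t) := by rw [hc]; ring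
    linarith [hint, hmul]

/-- For fixed `t ∈ (0,1)`, the quantile `Q_Y(t) = inf {α : P(Y ≤ α) > t}`
minimizes `α ↦ E[(Y − α)⁺] + α (1 − t)`. -/
theorem stmt1 {Ω : Type*} [MeasureSpace Ω]
    [IsProbabilityMeasure (volume : Measure Ω)]
    (Y : Ω → ℝ) (hY : Integrable Y) (t : ℝ) (ht : t ∈ Ioo (0:ℝ) 1) :
    ∀ a : ℝ,
      (∫ ω, max (Y ω - sInf {α : ℝ | ((volume : Measure Ω) {ω | Y ω ≤ α}).toReal > t}) 0)
        + (sInf {α : ℝ | ((volume : Measure Ω) {ω | Y ω ≤ α}).toReal > t}) * (1 - t)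
      ≤ (∫ ω, max (Y ω - a) 0) + a * (1 - t) := by
  set Y' : Ω → ℝ := hY.1.mk Y with hY'def
  have hm' : Measurable Y' := hY.1.measurable_mk
  have hae : Y =ᵐ[volume] Y' := hY.1.ae_eq_mk
  have hY' : Integrable Y' := hY.congr hae
  have hmeas : ∀ α : ℝ, (volume : Measure Ω) {ω | Y ω ≤ α} = volume {ω | Y' ω ≤ α} := by
    intro α
    apply measure_congr
    filter_upwards [hae] with ω h
    show (Y ω ≤ α) = (Y' ω ≤ α)
    rw [h]
  have hsets : {α : ℝ | ((volume : Measure Ω) {ω | Y ω ≤ α}).toReal > t}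
      = {α : ℝ | ((volume : Measure Ω) {ω | Y' ω ≤ α}).toReal > t} := by
    ext α; simp [hmeas α]
  have hintg : ∀ c : ℝ, (∫ ω, max (Y ω - c) 0) = ∫ ω, max (Y' ω - c) 0 := by
    intro c
    apply integral_congr_ae
    filter_upwards [hae] with ω h
    rw [h]
  intro a
  rw [hsets, hintg, hintg]
  exact aux_min Y' hm' hY' t ht a
end

section
/- Let Y be an integrable real random variable and let U be any uniformly distributed random variable on [0,1] such that Y = Q_Y(U) almost surely, where Q_Y is the quantile function of Y. Then U maximizes E[VY] over all random variables V uniformly distributed on [0,1] (defined on the same probability space). -/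
open MeasureTheory Set

/-- If `U` is uniform on `[0,1]` with `Y = Q_Y(U)` a.s., then `U` maximizes
`E[VY]` over uniformly distributed `V`. -/
theorem stmt2 {Ω : Type*} [MeasureSpace Ω]
    [IsProbabilityMeasure (volume : Measure Ω)]
    (Y : Ω → ℝ) (hY : Integrable Y)
    (U : Ω → ℝ) (hUm : Measurable U)
    (hU : Measure.map U (volume : Measure Ω) = volume.restrict (Icc (0:ℝ) 1))
    (hrep : ∀ᵐ ω ∂(volume : Measure Ω),
      Y ω = sInf {α : ℝ | ((volume : Measure Ω) {ω' | Y ω' ≤ α}).toReal > U ω}) :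
    ∀ V : Ω → ℝ, Measurable V →
      Measure.map V (volume : Measure Ω) = volume.restrict (Icc (0:ℝ) 1) →
      ∫ ω, V ω * Y ω ≤ ∫ ω, U ω * Y ω := by
  intro V hVm hV
  -- the CDF-like function
  set F : ℝ → ℝ := fun α => ((volume : Measure Ω) {ω' | Y ω' ≤ α}).toReal with hFdef
  set Q : ℝ → ℝ := fun t => sInf {α : ℝ | F α > t} with hQdef
  have hrep' : ∀ᵐ ω ∂(volume : Measure Ω), Y ω = Q (U ω) := hrep
  -- measurable representative of Y
  obtain ⟨Y', hY'm, hYY'⟩ : ∃ Y' : Ω → ℝ, Measurable Y' ∧ Y =ᵐ[volume] Y' :=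
    ⟨hY.1.mk Y, hY.1.stronglyMeasurable_mk.measurable, hY.1.ae_eq_mk⟩
  have hFeq : ∀ α : ℝ, F α = ((volume : Measure Ω) {ω' | Y' ω' ≤ α}).toReal := by
    intro α
    have : {ω' | Y ω' ≤ α} =ᵐ[volume] {ω' | Y' ω' ≤ α} := by
      rw [Filter.eventuallyEq_set]
      filter_upwards [hYY'] with ω h
      simp [h]
    show ((volume : Measure Ω) {ω' | Y ω' ≤ α}).toReal = _
    rw [measure_congr this]
  have hFmono : Monotone F := by
    intro a b hab
    exact ENNReal.toReal_mono (measure_ne_top _ _)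
      (measure_mono fun ω h => le_trans h hab)
  -- nonemptiness of the quantile sets
  have hne : ∀ t : ℝ, t < 1 → ∃ α : ℝ, t < F α := by
    intro t ht
    by_contra h
    push_neg at h
    have hmon : Monotone fun n : ℕ => {ω' | Y' ω' ≤ (n : ℝ)} := by
      intro m n hmn ω hω
      simp only [mem_setOf_eq] at hω ⊢
      exact le_trans hω (by exact_mod_cast hmn)
    have hU2 : ⋃ n : ℕ, {ω' | Y' ω' ≤ (n : ℝ)} = univ := by
      ext ω; simp only [mem_iUnion, mem_univ, iff_true]
      obtain ⟨n, hn⟩ := exists_nat_ge (Y' ω)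
      exact ⟨n, hn⟩
    have htend := tendsto_measure_iUnion_atTop (μ := (volume : Measure Ω)) hmon
    rw [hU2, measure_univ] at htend
    have hlt : ENNReal.ofReal t < 1 := ENNReal.ofReal_lt_one.mpr ht
    have hev := htend.eventually_const_lt hlt
    obtain ⟨n, hn⟩ := hev.exists
    simp only [Function.comp_apply] at hn
    have hnn : t < F n := by
      rw [hFeq]
      rcases le_or_gt t 0 with h0 | h0
      · have hpos : (0:ENNReal) < (volume : Measure Ω) {ω' | Y' ω' ≤ (n:ℝ)} :=
          lt_of_le_of_lt bot_le hn
        exact lt_of_le_of_lt h0 (ENNReal.toReal_pos hpos.ne' (measure_ne_top _ _))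
      · exact (ENNReal.ofReal_lt_iff_lt_toReal h0.le (measure_ne_top _ _)).mp hn
    exact absurd hnn (not_lt.mpr (h n))
  -- bddBelow of the quantile sets
  have hbdd : ∀ t : ℝ, 0 < t → BddBelow {α : ℝ | F α > t} := by
    intro t ht
    have hanti : Antitone fun n : ℕ => {ω' | Y' ω' ≤ -(n : ℝ)} := by
      intro m n hmn ω hω
      simp only [mem_setOf_eq] at hω ⊢
      exact le_trans hω (by exact_mod_cast neg_le_neg (Nat.cast_le.mpr hmn))
    have hint : ⋂ n : ℕ, {ω' | Y' ω' ≤ -(n : ℝ)} = (∅ : Set Ω) := by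
      ext ω; simp only [mem_iInter, mem_empty_iff_false, iff_false, not_forall, mem_setOf_eq,
        not_le]
      obtain ⟨n, hn⟩ := exists_nat_gt (-(Y' ω))
      exact ⟨n, by linarith⟩
    have htend := tendsto_measure_iInter_atTop (μ := (volume : Measure Ω))
      (s := fun n : ℕ => {ω' | Y' ω' ≤ -(n : ℝ)})
      (fun n => (hY'm measurableSet_Iic).nullMeasurableSet) hanti ⟨0, measure_ne_top _ _⟩
    rw [hint, measure_empty] at htend
    have hlt : (0:ENNReal) < ENNReal.ofReal t := ENNReal.ofReal_pos.mpr ht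
    obtain ⟨n, hn⟩ := (htend.eventually_lt_const hlt).exists
    simp only [Function.comp_apply] at hn
    refine ⟨-(n:ℝ), fun α hα => ?_⟩
    by_contra hc
    push_neg at hc
    have h1 : F α ≤ F (-(n:ℝ)) := hFmono hc.le
    have h2 : F (-(n:ℝ)) < t := by
      rw [hFeq]
      exact ENNReal.toReal_lt_of_lt_ofReal hn
    have hα' : t < F α := hα
    linarith
  -- monotonicity of Q on (0,1)
  have hQmono : MonotoneOn Q (Ioo (0:ℝ) 1) := by
    intro a ha b hb hab
    refine csInf_le_csInf (hbdd a ha.1) ?_ ?_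
    · obtain ⟨α, hα⟩ := hne b hb.2
      exact ⟨α, hα⟩
    · intro α hα
      exact lt_of_le_of_lt hab hα
  -- a.e. membership in Ioo 0 1
  have haemem : ∀ (W : Ω → ℝ), Measurable W →
      Measure.map W (volume : Measure Ω) = volume.restrict (Icc (0:ℝ) 1) →
      ∀ᵐ ω ∂(volume : Measure Ω), W ω ∈ Ioo (0:ℝ) 1 := by
    intro W hWm hW
    have h1 : (volume : Measure Ω) (W ⁻¹' (Ioo (0:ℝ) 1)ᶜ) = 0 := by
      rw [← Measure.map_apply hWm measurableSet_Ioo.compl, hW,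
        Measure.restrict_apply measurableSet_Ioo.compl]
      have : (Ioo (0:ℝ) 1)ᶜ ∩ Icc 0 1 = Icc (0:ℝ) 1 \ Ioo 0 1 := by
        rw [diff_eq, inter_comm]
      rw [this, Icc_diff_Ioo_same (by norm_num)]
      exact (Set.toFinite _).measure_zero _
    rw [ae_iff]
    convert h1 using 2
    rfl
  have hUae := haemem U hUm hU
  have hVae := haemem V hVm hV
  -- integrability of Q on [0,1]
  have hQU_int : Integrable (fun ω => Q (U ω)) (volume : Measure Ω) := hY.congr hrep'
  have hQasm : AEStronglyMeasurable Q (volume.restrict (Icc (0:ℝ) 1)) := by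
    have h1 : AEMeasurable Q (volume.restrict (Ioo (0:ℝ) 1)) :=
      aemeasurable_restrict_of_monotoneOn measurableSet_Ioo hQmono
    have h2 : volume.restrict (Ioo (0:ℝ) 1) = volume.restrict (Icc (0:ℝ) 1) :=
      Measure.restrict_congr_set Ioo_ae_eq_Icc
    rw [← h2]
    exact h1.aestronglyMeasurable
  have hQint : IntegrableOn Q (Icc (0:ℝ) 1) volume := by
    have hg : AEStronglyMeasurable Q (Measure.map U (volume : Measure Ω)) := by
      rw [hU]; exact hQasm
    have := (integrable_map_measure hg hUm.aemeasurable).mpr hQU_int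
    rwa [hU] at this
  -- the primitive G
  set G : ℝ → ℝ := fun x => ∫ t in Ioc (0:ℝ) x, Q t with hGdef
  have hGcont : ContinuousOn G (Icc (0:ℝ) 1) := intervalIntegral.continuousOn_primitive hQint
  have hGasm : AEStronglyMeasurable G (volume.restrict (Icc (0:ℝ) 1)) :=
    hGcont.aestronglyMeasurable measurableSet_Icc
  obtain ⟨C, hC⟩ := isCompact_Icc.exists_bound_of_continuousOn hGcont
  -- integral interchange helpers
  have hmapint : ∀ (W : Ω → ℝ), Measurable W →
      Measure.map W (volume : Measure Ω) = volume.restrict (Icc (0:ℝ) 1) →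
      (∫ ω, G (W ω) ∂(volume : Measure Ω)) = ∫ x in Icc (0:ℝ) 1, G x := by
    intro W hWm hW
    have hg : AEStronglyMeasurable G (Measure.map W (volume : Measure Ω)) := by
      rw [hW]; exact hGasm
    rw [← integral_map hWm.aemeasurable hg, hW]
  have hGint : ∀ (W : Ω → ℝ), Measurable W →
      Measure.map W (volume : Measure Ω) = volume.restrict (Icc (0:ℝ) 1) →
      Integrable (fun ω => G (W ω)) (volume : Measure Ω) := by
    intro W hWm hW
    have hg : AEStronglyMeasurable G (Measure.map W (volume : Measure Ω)) := by
      rw [hW]; exact hGasm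
    have hasm : AEStronglyMeasurable (fun ω => G (W ω)) (volume : Measure Ω) :=
      hg.comp_aemeasurable hWm.aemeasurable
    refine Integrable.mono' (integrable_const C) hasm ?_
    filter_upwards [haemem W hWm hW] with ω hω
    exact hC (W ω) (Ioo_subset_Icc_self hω)
  -- key pointwise inequality
  have hkey : ∀ u ∈ Ioo (0:ℝ) 1, ∀ v ∈ Ioo (0:ℝ) 1,
      v * Q u ≤ u * Q u + (G v - G u) := by
    intro u hu v hv
    have hIu : IntervalIntegrable Q volume 0 u := by
      apply IntegrableOn.intervalIntegrable
      apply hQint.mono_set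
      rw [uIcc_of_le hu.1.le]
      exact Icc_subset_Icc le_rfl hu.2.le
    have hIv : IntervalIntegrable Q volume 0 v := by
      apply IntegrableOn.intervalIntegrable
      apply hQint.mono_set
      rw [uIcc_of_le hv.1.le]
      exact Icc_subset_Icc le_rfl hv.2.le
    have hGeq : ∀ x ∈ Ioo (0:ℝ) 1, G x = ∫ t in (0:ℝ)..x, Q t := by
      intro x hx
      rw [intervalIntegral.integral_of_le hx.1.le]
    have hsub : G v - G u = ∫ t in u..v, Q t := by
      rw [hGeq u hu, hGeq v hv]
      exact intervalIntegral.integral_interval_sub_left hIv hIu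
    have hIuv : IntervalIntegrable Q volume u v := by
      apply IntegrableOn.intervalIntegrable
      apply hQint.mono_set
      intro t ht
      rcases le_total u v with h | h
      · rw [uIcc_of_le h] at ht
        exact ⟨le_trans hu.1.le ht.1, le_trans ht.2 hv.2.le⟩
      · rw [uIcc_of_ge h] at ht
        exact ⟨le_trans hv.1.le ht.1, le_trans ht.2 hu.2.le⟩
    have hmain : (v - u) * Q u ≤ ∫ t in u..v, Q t := by
      rcases le_total u v with h | h
      · have hconst : IntervalIntegrable (fun _ : ℝ => Q u) volume u v :=
          intervalIntegrable_const
        have hmono := intervalIntegral.integral_mono_on h hconst hIuv ?_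
        · rwa [intervalIntegral.integral_const, smul_eq_mul] at hmono
        · intro t ht
          exact hQmono hu ⟨lt_of_lt_of_le hu.1 ht.1, lt_of_le_of_lt ht.2 hv.2⟩ ht.1
      · have hconst : IntervalIntegrable (fun _ : ℝ => Q u) volume v u :=
          intervalIntegrable_const
        have hmono := intervalIntegral.integral_mono_on h hIuv.symm hconst ?_
        · rw [intervalIntegral.integral_const, smul_eq_mul] at hmono
          rw [intervalIntegral.integral_symm]
          linarith [hmono]
        · intro t ht
          exact hQmono ⟨lt_of_lt_of_le hv.1 ht.1, lt_of_le_of_lt ht.2 hu.2⟩ hu ht.2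
    rw [hsub]
    nlinarith [hmain]
  -- a.e. inequality
  have haeineq : ∀ᵐ ω ∂(volume : Measure Ω),
      V ω * Y ω ≤ U ω * Y ω + (G (V ω) - G (U ω)) := by
    filter_upwards [hrep', hUae, hVae] with ω hYω hUω hVω
    rw [hYω]
    exact hkey (U ω) hUω (V ω) hVω
  -- integrability of products
  have hVY_int : Integrable (fun ω => V ω * Y ω) (volume : Measure Ω) := by
    refine hY.bdd_mul (c := 1) hVm.aestronglyMeasurable ?_
    filter_upwards [hVae] with ω hω
    rw [Real.norm_eq_abs, abs_of_nonneg hω.1.le]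
    exact hω.2.le
  have hUY_int : Integrable (fun ω => U ω * Y ω) (volume : Measure Ω) := by
    refine hY.bdd_mul (c := 1) hUm.aestronglyMeasurable ?_
    filter_upwards [hUae] with ω hω
    rw [Real.norm_eq_abs, abs_of_nonneg hω.1.le]
    exact hω.2.le
  have hGU_int := hGint U hUm hU
  have hGV_int := hGint V hVm hV
  have hG_sub : Integrable (fun ω => G (V ω) - G (U ω)) (volume : Measure Ω) :=
    hGV_int.sub hGU_int
  have hRHS_int : Integrable
      (fun ω => U ω * Y ω + (G (V ω) - G (U ω))) (volume : Measure Ω) :=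
    hUY_int.add hG_sub
  have hstep := integral_mono_ae hVY_int hRHS_int haeineq
  have heq : (∫ ω, (U ω * Y ω + (G (V ω) - G (U ω))) ∂(volume : Measure Ω))
      = ∫ ω, U ω * Y ω := by
    rw [integral_add hUY_int hG_sub,
      integral_sub hGV_int hGU_int,
      hmapint V hVm hV, hmapint U hUm hU]
    ring
  calc ∫ ω, V ω * Y ω ≤ _ := hstep
    _ = ∫ ω, U ω * Y ω := heq
end

section
/- If (α,β) solves the Koenker–Bassett problem at level t and V_t solves its dual sup{E[V Y] : V ∈ [0,1], E[V] = 1−t, E[V X] = 0}, then complementary slackness holds: almost surely Y > α + βᵀX implies V_t = 1 and Y < α + βᵀX implies V_t = 0. In particular, if P(Y = a + bᵀX) = 0 for every (a,b) ∈ ℝ^{1+N}, then V_t = 1_{{Y > α + βᵀX}} almost surely. -/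
open MeasureTheory Set
open Filter Topology

set_option maxHeartbeats 1000000
set_option synthInstance.maxHeartbeats 400000

private lemma stmt7_ultralim (U : Ultrafilter ℕ) {u : ℕ → ℝ} {c C : ℝ}
    (h : ∀ n, u n ∈ Set.Icc c C) :
    ∃ x ∈ Set.Icc c C, Tendsto u (U : Filter ℕ) (𝓝 x) := by
  have hmem : (U.map u : Filter ℝ) ≤ Filter.principal (Set.Icc c C) := by
    rw [Filter.le_principal_iff]
    exact Filter.mem_map.2 (Filter.mem_of_superset Filter.univ_mem fun n _ => h n)
  obtain ⟨x, hx, hle⟩ := isCompact_Icc.ultrafilter_le_nhds (U.map u) hmem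
  exact ⟨x, hx, hle⟩

private lemma stmt7_density {Ω : Type*} [MeasureSpace Ω]
    [IsProbabilityMeasure (volume : Measure Ω)]
    (U : Ultrafilter ℕ) (G : ℕ → Ω → ℝ) (hGm : ∀ n, Measurable (G n))
    (hG01 : ∀ n ω, G n ω ∈ Set.Icc (0:ℝ) 1) :
    ∃ h : Ω → ℝ, Measurable h ∧ (∀ ω, h ω ∈ Set.Icc (0:ℝ) 1) ∧
      ∀ f : Ω → ℝ, Integrable f volume →
        Tendsto (fun n => ∫ ω, G n ω * f ω) (U : Filter ℕ)
          (𝓝 (∫ ω, h ω * f ω)) := by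
  -- basic facts about the G n
  have hGnorm : ∀ n ω, ‖G n ω‖ ≤ 1 := fun n ω => by
    rw [Real.norm_eq_abs, abs_of_nonneg (hG01 n ω).1]; exact (hG01 n ω).2
  have hGint : ∀ n, Integrable (G n) volume := fun n =>
    (integrable_const (1:ℝ)).mono' (hGm n).aestronglyMeasurable
      (Eventually.of_forall fun ω => hGnorm n ω)
  have hupper : ∀ (A : Set Ω) (n : ℕ), (∫ ω in A, G n ω) ≤ (volume A).toReal := by
    intro A n
    calc (∫ ω in A, G n ω) ≤ ∫ _ω in A, (1:ℝ) :=
          integral_mono (hGint n).restrict (integrable_const 1) (fun ω => (hG01 n ω).2)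
      _ = (volume A).toReal := by simp [Measure.restrict_apply_univ, measureReal_def]
  have htoReal_le_one : ∀ A : Set Ω, (volume A).toReal ≤ 1 := by
    intro A
    have h1 : volume A ≤ 1 := prob_le_one
    have := ENNReal.toReal_mono (by simp) h1
    simpa using this
  have H : ∀ A : Set Ω, ∃ x ∈ Set.Icc (0:ℝ) 1,
      Tendsto (fun n => ∫ ω in A, G n ω) (U : Filter ℕ) (𝓝 x) := by
    intro A
    apply stmt7_ultralim U
    intro n
    exact ⟨integral_nonneg fun ω => (hG01 n ω).1, (hupper A n).trans (htoReal_le_one A)⟩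
  choose ℓ hℓIcc hℓT using H
  have hnn : ∀ A, 0 ≤ ℓ A := fun A => (hℓIcc A).1
  have hdom : ∀ A : Set Ω, ℓ A ≤ (volume A).toReal := fun A =>
    le_of_tendsto (hℓT A) (Eventually.of_forall fun n => hupper A n)
  have hempty : ℓ ∅ = 0 := by
    refine tendsto_nhds_unique (hℓT ∅) ?_
    simpa using (tendsto_const_nhds : Tendsto (fun _ : ℕ => (0:ℝ)) _ (𝓝 0))
  have hadd : ∀ A B : Set Ω, MeasurableSet B → Disjoint A B → ℓ (A ∪ B) = ℓ A + ℓ B := by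
    intro A B hB hd
    refine tendsto_nhds_unique (hℓT (A ∪ B)) ?_
    have : ∀ n, (∫ ω in A ∪ B, G n ω) = (∫ ω in A, G n ω) + ∫ ω in B, G n ω := fun n =>
      setIntegral_union hd hB (hGint n).integrableOn (hGint n).integrableOn
    rw [funext this]
    exact ((hℓT A).add (hℓT B))
  -- countable additivity
  have hsigma : ∀ (A : ℕ → Set Ω), (∀ i, MeasurableSet (A i)) →
      Pairwise (Function.onFun Disjoint A) →
      HasSum (fun i => ℓ (A i)) (ℓ (⋃ i, A i)) := by
    intro A hA hd
    have hsplit : ∀ K : ℕ, (⋃ i, A (i + K)) = A K ∪ ⋃ i, A (i + (K + 1)) := by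
      intro K
      ext x
      simp only [Set.mem_iUnion, Set.mem_union]
      constructor
      · rintro ⟨i, hi⟩
        cases i with
        | zero => left; simpa using hi
        | succ j => right; exact ⟨j, by convert hi using 2; omega⟩
      · rintro (hx | ⟨i, hi⟩)
        · exact ⟨0, by simpa using hx⟩
        · exact ⟨i + 1, by convert hi using 2; omega⟩
    have claim1 : ∀ K : ℕ, ℓ (⋃ i, A i) =
        (∑ i ∈ Finset.range K, ℓ (A i)) + ℓ (⋃ i, A (i + K)) := by
      intro K
      induction K with
      | zero => simp
      | succ K ih =>
        rw [ih, hsplit K, hadd (A K) _ (MeasurableSet.iUnion fun i => hA _) ?_,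
          Finset.sum_range_succ]
        · ring
        · refine Set.disjoint_iUnion_right.2 fun i => hd (by omega)
    have hfin : (∑' i, volume (A i)) ≠ ⊤ := by
      rw [← measure_iUnion hd hA]
      exact (measure_lt_top _ _).ne
    have claim2 : Tendsto (fun K => ℓ (⋃ i, A (i + K))) atTop (𝓝 0) := by
      apply squeeze_zero (fun K => hnn _) (g := fun K => (∑' i, volume (A (i + K))).toReal)
      · intro K
        refine (hdom _).trans ?_
        refine ENNReal.toReal_mono ?_ ?_
        · exact ne_top_of_le_ne_top hfin
            (ENNReal.summable.tsum_le_tsum_of_inj (fun i => i + K) (add_left_injective K)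
              (fun c _ => zero_le) (fun i => le_rfl) ENNReal.summable)
        · exact measure_iUnion_le _
      · have h0 := ENNReal.tendsto_sum_nat_add (fun i => volume (A i)) hfin
        have := (ENNReal.tendsto_toReal (a := 0) (by simp)).comp h0
        simpa [Function.comp_def] using this
    have claim3 : Tendsto (fun K => ∑ i ∈ Finset.range K, ℓ (A i)) atTop
        (𝓝 (ℓ (⋃ i, A i))) := by
      have : (fun K => ∑ i ∈ Finset.range K, ℓ (A i)) =
          fun K => ℓ (⋃ i, A i) - ℓ (⋃ i, A (i + K)) := by
        funext K; rw [claim1 K]; ring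
      rw [this]
      simpa using (tendsto_const_nhds.sub claim2)
    exact (hasSum_iff_tendsto_nat_of_nonneg (fun i => hnn _) _).2 claim3
  -- the limit measure
  set μ' : Measure Ω := Measure.ofMeasurable (fun A _ => ENNReal.ofReal (ℓ A))
    (by simp [hempty])
    (by
      intro A hA hd
      have hs := hsigma A hA hd
      rw [← ENNReal.ofReal_tsum_of_nonneg (fun i => hnn _) hs.summable, hs.tsum_eq]) with hμ'
  have happly : ∀ A : Set Ω, MeasurableSet A → μ' A = ENNReal.ofReal (ℓ A) := by
    intro A hA
    rw [hμ']
    exact Measure.ofMeasurable_apply A hA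
  have hle : μ' ≤ volume := by
    refine Measure.le_iff.2 fun A hA => ?_
    rw [happly A hA]
    exact ENNReal.ofReal_le_of_le_toReal (hdom A)
  haveI : IsFiniteMeasure μ' := isFiniteMeasure_of_le volume hle
  have hac : μ' ≪ volume := hle.absolutelyContinuous
  set f0 : Ω → ENNReal := μ'.rnDeriv volume with hf0
  have hf0m : Measurable f0 := Measure.measurable_rnDeriv _ _
  have hf0le : f0 ≤ᵐ[volume] 1 := Measure.rnDeriv_le_one_of_le hle
  have hsetl : ∀ A : Set Ω, MeasurableSet A →
      (∫⁻ ω in A, f0 ω ∂volume) = ENNReal.ofReal (ℓ A) := by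
    intro A hA
    rw [← withDensity_apply f0 hA, Measure.withDensity_rnDeriv_eq μ' volume hac, happly A hA]
  set h : Ω → ℝ := fun ω => min ((f0 ω).toReal) 1 with hh
  have hm : Measurable h := (hf0m.ennreal_toReal).min measurable_const
  have hIcc : ∀ ω, h ω ∈ Set.Icc (0:ℝ) 1 :=
    fun ω => ⟨le_min ENNReal.toReal_nonneg zero_le_one, min_le_right _ _⟩
  have hhae : h =ᵐ[volume] fun ω => (f0 ω).toReal := by
    filter_upwards [hf0le] with ω hω
    rw [hh]
    exact min_eq_left (by simpa using ENNReal.toReal_mono (by simp) hω)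
  have hint : ∀ A : Set Ω, MeasurableSet A → (∫ ω in A, h ω) = ℓ A := by
    intro A hA
    calc (∫ ω in A, h ω) = ∫ ω in A, (f0 ω).toReal :=
          integral_congr_ae (ae_restrict_of_ae hhae)
      _ = (∫⁻ ω in A, f0 ω ∂volume).toReal := by
          refine integral_toReal (hf0m.aemeasurable.restrict) ?_
          exact ae_restrict_of_ae (hf0le.mono fun ω h1 => lt_of_le_of_lt h1 (by simp))
      _ = ℓ A := by rw [hsetl A hA, ENNReal.toReal_ofReal (hnn A)]
  refine ⟨h, hm, hIcc, ?_⟩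
  -- transfer to all integrable f
  have hbdd1 : ∀ (g : Ω → ℝ), (∀ ω, g ω ∈ Set.Icc (0:ℝ) 1) → ∃ C, ∀ ω, ‖g ω‖ ≤ C := by
    intro g hg01
    exact ⟨1, fun ω => by rw [Real.norm_eq_abs, abs_of_nonneg (hg01 ω).1]; exact (hg01 ω).2⟩
  have hGfi : ∀ (g : Ω → ℝ), Measurable g → (∀ ω, g ω ∈ Set.Icc (0:ℝ) 1) →
      ∀ (f : Ω → ℝ), Integrable f volume → Integrable (fun ω => g ω * f ω) volume := by
    intro g hg hg01 f hf
    exact hf.bdd_mul hg.aestronglyMeasurable (Eventually.of_forall (hbdd1 g hg01).choose_spec)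
  have hbd : ∀ (g : Ω → ℝ), Measurable g → (∀ ω, g ω ∈ Set.Icc (0:ℝ) 1) →
      ∀ (f : Ω → ℝ), Integrable f volume →
        |∫ ω, g ω * f ω| ≤ ∫ ω, |f ω| := by
    intro g hg hg01 f hf
    have h1 := hGfi g hg hg01 f hf
    calc |∫ ω, g ω * f ω| ≤ ∫ ω, |g ω * f ω| := by
          simpa only [Real.norm_eq_abs]
            using norm_integral_le_integral_norm (μ := volume) (fun ω => g ω * f ω)
      _ ≤ ∫ ω, |f ω| := by
          refine integral_mono h1.abs hf.abs (fun ω => ?_)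
          rw [abs_mul]
          calc |g ω| * |f ω| ≤ 1 * |f ω| := by
                refine mul_le_mul_of_nonneg_right ?_ (abs_nonneg _)
                rw [abs_of_nonneg (hg01 ω).1]; exact (hg01 ω).2
            _ = |f ω| := one_mul _
  intro f hf
  refine Integrable.induction (μ := volume)
    (P := fun f => Tendsto (fun n => ∫ ω, G n ω * f ω) (U : Filter ℕ)
      (𝓝 (∫ ω, h ω * f ω))) ?_ ?_ ?_ ?_ hf
  · -- indicators
    intro c A hA _
    have hrw : ∀ (g : Ω → ℝ),
        (fun ω => g ω * (A.indicator (fun _ => c) ω)) = A.indicator (fun ω => g ω * c) := by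
      intro g; funext ω; by_cases hω : ω ∈ A <;> simp [hω]
    have e1 : ∀ (g : Ω → ℝ), ∫ ω, g ω * (A.indicator (fun _ => c) ω)
        = (∫ ω in A, g ω) * c := by
      intro g
      rw [show (fun ω => g ω * (A.indicator (fun _ => c) ω)) = A.indicator (fun ω => g ω * c)
        from hrw g] at *
      rw [integral_indicator hA, integral_mul_const]
    simp only [e1]
    rw [hint A hA]
    exact (hℓT A).mul_const c
  · -- additivity
    intro f g _ hfi hgi hPf hPg
    have eG : ∀ (w : Ω → ℝ), Measurable w → (∀ ω, w ω ∈ Set.Icc (0:ℝ) 1) →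
        ∫ ω, w ω * (f + g) ω = (∫ ω, w ω * f ω) + ∫ ω, w ω * g ω := by
      intro w hw hw01
      rw [← integral_add (hGfi w hw hw01 f hfi) (hGfi w hw hw01 g hgi)]
      congr 1; funext ω; simp only [Pi.add_apply]; ring
    have e2 := eG h hm hIcc
    have e1 : ∀ n, ∫ ω, G n ω * (f + g) ω
        = (∫ ω, G n ω * f ω) + ∫ ω, G n ω * g ω := fun n => eG (G n) (hGm n) (hG01 n)
    simp only [e1, e2]
    exact hPf.add hPg
  · -- closedness in L¹
    refine IsSeqClosed.isClosed ?_
    intro F Flim hmemF hconv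
    have hfi : Integrable (⇑Flim) volume := L1.integrable_coeFn Flim
    have hfki : ∀ k, Integrable (⇑(F k)) volume := fun k => L1.integrable_coeFn (F k)
    have hnormint : ∀ k, ∫ ω, |Flim ω - F k ω| = ‖F k - Flim‖ := by
      intro k
      rw [norm_sub_rev, L1.norm_eq_integral_norm (Flim - F k)]
      refine integral_congr_ae ?_
      filter_upwards [Lp.coeFn_sub Flim (F k)] with ω hω
      rw [hω]
      simp [Real.norm_eq_abs]
    have hCk : ∀ (k : ℕ) (g : Ω → ℝ), Measurable g → (∀ ω, g ω ∈ Set.Icc (0:ℝ) 1) →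
        |(∫ ω, g ω * Flim ω) - ∫ ω, g ω * F k ω| ≤ ‖F k - Flim‖ := by
      intro k g hg hg01
      have hsub : Integrable (fun ω => Flim ω - F k ω) volume := hfi.sub (hfki k)
      have e : (∫ ω, g ω * Flim ω) - ∫ ω, g ω * F k ω
          = ∫ ω, g ω * (Flim ω - F k ω) := by
        rw [← integral_sub (hGfi g hg hg01 _ hfi) (hGfi g hg hg01 _ (hfki k))]
        congr 1; funext ω; ring
      rw [e, ← hnormint k]
      exact hbd g hg hg01 _ hsub
    obtain ⟨x, -, hxT⟩ := stmt7_ultralim U (u := fun n => ∫ ω, G n ω * Flim ω)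
      (c := -(∫ ω, |Flim ω|)) (C := ∫ ω, |Flim ω|)
      (fun n => abs_le.1 (hbd (G n) (hGm n) (hG01 n) _ hfi))
    have est1 : ∀ k, |x - ∫ ω, h ω * F k ω| ≤ ‖F k - Flim‖ := by
      intro k
      have hT : Tendsto (fun n => (∫ ω, G n ω * Flim ω) - ∫ ω, G n ω * F k ω)
          (U : Filter ℕ) (𝓝 (x - ∫ ω, h ω * F k ω)) := hxT.sub (hmemF k)
      exact le_of_tendsto hT.abs
        (Eventually.of_forall fun n => hCk k (G n) (hGm n) (hG01 n))
    have est2 : ∀ k, |(∫ ω, h ω * F k ω) - ∫ ω, h ω * Flim ω| ≤ ‖F k - Flim‖ := by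
      intro k
      rw [abs_sub_comm]
      exact hCk k h hm hIcc
    have est : ∀ k, |x - ∫ ω, h ω * Flim ω| ≤ 2 * ‖F k - Flim‖ := by
      intro k
      calc |x - ∫ ω, h ω * Flim ω|
          ≤ |x - ∫ ω, h ω * F k ω| + |(∫ ω, h ω * F k ω) - ∫ ω, h ω * Flim ω| :=
            abs_sub_le _ _ _
        _ ≤ 2 * ‖F k - Flim‖ := by
            have := est1 k; have := est2 k; linarith
    have hnorm0 : Tendsto (fun k => 2 * ‖F k - Flim‖) atTop (𝓝 0) := by
      have h1 : Tendsto (fun k => F k - Flim) atTop (𝓝 0) := by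
        simpa using hconv.sub (tendsto_const_nhds : Tendsto (fun _ : ℕ => Flim) atTop _)
      have := (h1.norm).const_mul 2
      simpa using this
    have hle0 : |x - ∫ ω, h ω * Flim ω| ≤ 0 :=
      ge_of_tendsto hnorm0 (Eventually.of_forall est)
    have hxeq : x = ∫ ω, h ω * Flim ω := by
      have := le_antisymm hle0 (abs_nonneg _)
      have := abs_eq_zero.1 this
      linarith
    rw [Set.mem_setOf_eq]
    rwa [hxeq] at hxT
  · -- a.e. invariance
    intro f g hfg hfi hPf
    have e1 : ∀ n, (∫ ω, G n ω * f ω) = ∫ ω, G n ω * g ω := fun n =>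
      integral_congr_ae (hfg.mono fun ω e => by simp [e])
    have e2 : (∫ ω, h ω * f ω) = ∫ ω, h ω * g ω :=
      integral_congr_ae (hfg.mono fun ω e => by simp [e])
    simpa only [e1, e2] using hPf

private lemma stmt7_Xk {Ω : Type*} [MeasureSpace Ω] {N : ℕ} (X : Ω → (Fin N → ℝ))
    (hX : Measurable X) (hXi : Integrable X) (k : Fin N) :
    Integrable (fun ω => X ω k) volume :=
  (hXi.norm).mono' ((measurable_pi_apply k).comp hX).aestronglyMeasurable
    (Filter.Eventually.of_forall fun ω => by simpa using norm_le_pi_norm (X ω) k)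

private lemma stmt7_key {Ω : Type*} [MeasureSpace Ω]
    [IsProbabilityMeasure (volume : Measure Ω)]
    {N : ℕ} (X : Ω → (Fin N → ℝ)) (Y : Ω → ℝ)
    (hX : Measurable X) (hYm : Measurable Y)
    (hXi : Integrable X) (hY : Integrable Y)
    (t : ℝ) (a : ℝ) (b : Fin N → ℝ)
    (hprimal : ∀ (a' : ℝ) (b' : Fin N → ℝ),
        (∫ ω, max (Y ω - a - ∑ k, b k * X ω k) 0) + (1 - t) * a
          ≤ (∫ ω, max (Y ω - a' - ∑ k, b' k * X ω k) 0) + (1 - t) * a')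
    (α : ℝ) (β : Fin N → ℝ) :
    (1 - t) * α ≤
      (∫ ω in {ω | 0 < Y ω - a - ∑ k, b k * X ω k}, (α + ∑ k, β k * X ω k))
      + ∫ ω in {ω | Y ω - a - ∑ k, b k * X ω k = 0}, max (α + ∑ k, β k * X ω k) 0 := by
  set Z : Ω → ℝ := fun ω => Y ω - a - ∑ k, b k * X ω k with hZdef
  set w : Ω → ℝ := fun ω => α + ∑ k, β k * X ω k with hwdef
  have hXk : ∀ k, Integrable (fun ω => X ω k) volume := stmt7_Xk X hX hXi
  have hXkm : ∀ k : Fin N, Measurable (fun ω => X ω k) :=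
    fun k => (measurable_pi_apply k).comp hX
  have hZm : Measurable Z :=
    (hYm.sub measurable_const).sub
      (Finset.measurable_sum Finset.univ fun k _ => (hXkm k).const_mul (b k))
  have hwm : Measurable w :=
    measurable_const.add (Finset.measurable_sum Finset.univ fun k _ => (hXkm k).const_mul (β k))
  have hZi : Integrable Z volume :=
    (hY.sub (integrable_const a)).sub
      (integrable_finset_sum _ fun k _ => ((hXk k).const_mul (b k)))
  have hwi : Integrable w volume :=
    (integrable_const α).add (integrable_finset_sum _ fun k _ => ((hXk k).const_mul (β k)))
  have hprimal' : ∀ n : ℕ, (1 - t) * α ≤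
      ∫ ω, (max (Z ω + (1/((n:ℝ)+1)) * w ω) 0 - max (Z ω) 0) * ((n:ℝ)+1) := by
    intro n
    set s : ℝ := 1/((n:ℝ)+1) with hs
    have hnpos : (0:ℝ) < (n:ℝ)+1 := by positivity
    have hspos : 0 < s := by rw [hs]; positivity
    have hsn : s * ((n:ℝ)+1) = 1 := by rw [hs]; field_simp
    have hA := hprimal (a - s * α) (fun k => b k - s * β k)
    have hrw : (fun ω => max (Y ω - (a - s * α) - ∑ k, (b k - s * β k) * X ω k) 0)
        = fun ω => max (Z ω + s * w ω) 0 := by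
      funext ω
      have e1 : ∑ k, (b k - s * β k) * X ω k
          = (∑ k, b k * X ω k) - s * ∑ k, β k * X ω k := by
        rw [Finset.mul_sum, ← Finset.sum_sub_distrib]
        exact Finset.sum_congr rfl fun k _ => by ring
      rw [e1, hZdef, hwdef]
      ring_nf
    rw [hrw] at hA
    have hI1 : Integrable (fun ω => max (Z ω + s * w ω) 0) volume :=
      (hZi.add (hwi.const_mul s)).pos_part
    have hI0 : Integrable (fun ω => max (Z ω) 0) volume := hZi.pos_part
    have hsub : (∫ ω, (max (Z ω + s * w ω) 0 - max (Z ω) 0))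
        = (∫ ω, max (Z ω + s * w ω) 0) - ∫ ω, max (Z ω) 0 := integral_sub hI1 hI0
    have hstep : (1 - t) * (s * α) ≤ ∫ ω, (max (Z ω + s * w ω) 0 - max (Z ω) 0) := by
      rw [hsub]; linarith
    have : (∫ ω, (max (Z ω + s * w ω) 0 - max (Z ω) 0)) * ((n:ℝ)+1)
        = ∫ ω, (max (Z ω + s * w ω) 0 - max (Z ω) 0) * ((n:ℝ)+1) :=
      (integral_mul_const _ _).symm
    rw [← this]
    have e : (1 - t) * (s * α) * ((n:ℝ)+1) = (1 - t) * α := by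
      have e2 : (1 - t) * (s * α) * ((n:ℝ)+1) = (1 - t) * α * (s * ((n:ℝ)+1)) := by ring
      rw [e2, hsn, mul_one]
    have := mul_le_mul_of_nonneg_right hstep (le_of_lt hnpos)
    linarith
  -- dominated convergence
  set g : Ω → ℝ := fun ω => if 0 < Z ω then w ω else if Z ω = 0 then max (w ω) 0 else 0
    with hgdef
  have hdct : Tendsto (fun n : ℕ =>
      ∫ ω, (max (Z ω + (1/((n:ℝ)+1)) * w ω) 0 - max (Z ω) 0) * ((n:ℝ)+1)) atTop
      (𝓝 (∫ ω, g ω)) := by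
    refine tendsto_integral_of_dominated_convergence (fun ω => |w ω|) ?_ hwi.abs ?_ ?_
    · intro n
      exact ((((hZm.add (hwm.const_mul _)).max measurable_const).sub
        (hZm.max measurable_const)).mul_const _).aestronglyMeasurable
    · intro n
      refine Filter.Eventually.of_forall fun ω => ?_
      have hnpos : (0:ℝ) < (n:ℝ)+1 := by positivity
      have hsn : (1/((n:ℝ)+1)) * ((n:ℝ)+1) = 1 := by field_simp
      have h1 : |max (Z ω + (1/((n:ℝ)+1)) * w ω) 0 - max (Z ω) 0|
          ≤ |(1/((n:ℝ)+1)) * w ω| := by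
        have := abs_max_sub_max_le_abs (Z ω + (1/((n:ℝ)+1)) * w ω) (Z ω) 0
        simpa using this
      rw [Real.norm_eq_abs, abs_mul, abs_of_pos hnpos]
      calc |max (Z ω + (1/((n:ℝ)+1)) * w ω) 0 - max (Z ω) 0| * ((n:ℝ)+1)
          ≤ |(1/((n:ℝ)+1)) * w ω| * ((n:ℝ)+1) :=
            mul_le_mul_of_nonneg_right h1 (le_of_lt hnpos)
        _ = |w ω| := by
            rw [abs_mul, abs_of_pos (by positivity : (0:ℝ) < 1/((n:ℝ)+1))]
            have e2 : 1/((n:ℝ)+1) * |w ω| * ((n:ℝ)+1)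
                = |w ω| * (1/((n:ℝ)+1) * ((n:ℝ)+1)) := by ring
            rw [e2, hsn, mul_one]
    · refine Filter.Eventually.of_forall fun ω => ?_
      have hs0 : Tendsto (fun n : ℕ => (1/((n:ℝ)+1)) * w ω) atTop (𝓝 0) := by
        simpa using tendsto_one_div_add_atTop_nhds_zero_nat.mul_const (w ω)
      have hZs : Tendsto (fun n : ℕ => Z ω + (1/((n:ℝ)+1)) * w ω) atTop (𝓝 (Z ω)) := by
        simpa using (tendsto_const_nhds.add hs0)
      rcases lt_trichotomy (Z ω) 0 with hneg | hzero | hpos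
      · have hev : ∀ᶠ n : ℕ in atTop, Z ω + (1/((n:ℝ)+1)) * w ω < 0 :=
          hZs.eventually (eventually_lt_nhds hneg)
        have hg : g ω = 0 := by
          rw [hgdef]
          simp only [if_neg (by linarith : ¬ 0 < Z ω), if_neg (ne_of_lt hneg)]
        rw [hg]
        refine Tendsto.congr' ?_ tendsto_const_nhds
        filter_upwards [hev] with n hn
        show (0:ℝ) = (max (Z ω + (1/((n:ℝ)+1)) * w ω) 0 - max (Z ω) 0) * ((n:ℝ)+1)
        rw [max_eq_right hn.le, max_eq_right hneg.le]
        ring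
      · have hg : g ω = max (w ω) 0 := by rw [hgdef]; simp [hzero]
        rw [hg]
        refine Tendsto.congr' ?_ tendsto_const_nhds
        refine Filter.Eventually.of_forall fun n => ?_
        have hnpos : (0:ℝ) < (n:ℝ)+1 := by positivity
        have hspos : (0:ℝ) < 1/((n:ℝ)+1) := by positivity
        have hsn : (1/((n:ℝ)+1)) * ((n:ℝ)+1) = 1 := by field_simp
        show max (w ω) 0
            = (max (Z ω + (1/((n:ℝ)+1)) * w ω) 0 - max (Z ω) 0) * ((n:ℝ)+1)
        rw [hzero]
        rcases le_or_gt (w ω) 0 with hw | hw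
        · have hmn : (1/((n:ℝ)+1)) * w ω ≤ 0 :=
            mul_nonpos_of_nonneg_of_nonpos hspos.le hw
          rw [max_eq_right (by linarith : (0:ℝ) + (1/((n:ℝ)+1)) * w ω ≤ 0),
            max_eq_right hw, max_self]
          ring
        · have hmp : 0 < (1/((n:ℝ)+1)) * w ω := mul_pos hspos hw
          rw [max_eq_left (by linarith : (0:ℝ) ≤ (0:ℝ) + (1/((n:ℝ)+1)) * w ω),
            max_eq_left hw.le, max_self]
          have e2 : ((0:ℝ) + 1/((n:ℝ)+1) * w ω - 0) * ((n:ℝ)+1)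
              = w ω * (1/((n:ℝ)+1) * ((n:ℝ)+1)) := by ring
          rw [e2, hsn, mul_one]
      · have hev : ∀ᶠ n : ℕ in atTop, 0 < Z ω + (1/((n:ℝ)+1)) * w ω :=
          hZs.eventually (eventually_gt_nhds hpos)
        have hg : g ω = w ω := by rw [hgdef]; simp only [if_pos hpos]
        rw [hg]
        refine Tendsto.congr' ?_ tendsto_const_nhds
        filter_upwards [hev] with n hn
        have hsn : (1/((n:ℝ)+1)) * ((n:ℝ)+1) = 1 := by
          have : (0:ℝ) < (n:ℝ)+1 := by positivity
          field_simp
        show w ω = (max (Z ω + (1/((n:ℝ)+1)) * w ω) 0 - max (Z ω) 0) * ((n:ℝ)+1)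
        rw [max_eq_left hn.le, max_eq_left hpos.le]
        have e2 : (Z ω + 1/((n:ℝ)+1) * w ω - Z ω) * ((n:ℝ)+1)
            = w ω * (1/((n:ℝ)+1) * ((n:ℝ)+1)) := by ring
        rw [e2, hsn, mul_one]
  have hglb : (1 - t) * α ≤ ∫ ω, g ω :=
    ge_of_tendsto hdct (Filter.Eventually.of_forall hprimal')
  have hSpos : MeasurableSet {ω | 0 < Z ω} := measurableSet_lt measurable_const hZm
  have hS : MeasurableSet {ω | Z ω = 0} := hZm (measurableSet_singleton 0)
  have hgsplit : g = fun ω => Set.indicator {ω | 0 < Z ω} w ω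
      + Set.indicator {ω | Z ω = 0} (fun ω => max (w ω) 0) ω := by
    funext ω
    rw [hgdef]
    by_cases h1 : 0 < Z ω
    · simp [Set.indicator_apply, Set.mem_setOf_eq, h1, ne_of_gt h1]
    · by_cases h2 : Z ω = 0
      · simp [Set.indicator_apply, Set.mem_setOf_eq, h1, h2]
      · simp [Set.indicator_apply, Set.mem_setOf_eq, h1, h2]
  have hsum : (∫ ω, g ω) = (∫ ω in {ω | 0 < Z ω}, w ω)
      + ∫ ω in {ω | Z ω = 0}, max (w ω) 0 := by
    rw [hgsplit, integral_add (hwi.indicator hSpos) (hwi.pos_part.indicator hS),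
      integral_indicator hSpos, integral_indicator hS]
  rw [hsum] at hglb
  exact hglb

-- construction of the dual optimizer density on {Z = 0}
private lemma stmt7_tau {Ω : Type*} [MeasureSpace Ω]
    [IsProbabilityMeasure (volume : Measure Ω)]
    {N : ℕ} (X : Ω → (Fin N → ℝ)) (Z : Ω → ℝ)
    (hX : Measurable X) (hXi : Integrable X) (hZm : Measurable Z)
    (t : ℝ)
    (key : ∀ (α : ℝ) (β : Fin N → ℝ),
      (1 - t) * α ≤
        (∫ ω in {ω | 0 < Z ω}, (α + ∑ k, β k * X ω k))
        + ∫ ω in {ω | Z ω = 0}, max (α + ∑ k, β k * X ω k) 0) :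
    ∃ h : Ω → ℝ, Measurable h ∧ (∀ ω, h ω ∈ Set.Icc (0:ℝ) 1) ∧
      (∫ ω in {ω | Z ω = 0}, h ω) = (1 - t) - (volume {ω | 0 < Z ω}).toReal ∧
      ∀ k, (∫ ω in {ω | Z ω = 0}, h ω * X ω k) = - ∫ ω in {ω | 0 < Z ω}, X ω k := by
  classical
  have hXk : ∀ k, Integrable (fun ω => X ω k) volume := stmt7_Xk X hX hXi
  have hXkm : ∀ k : Fin N, Measurable (fun ω => X ω k) :=
    fun k => (measurable_pi_apply k).comp hX
  have hSpos : MeasurableSet {ω | 0 < Z ω} := measurableSet_lt measurable_const hZm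
  have hS : MeasurableSet {ω | Z ω = 0} := hZm (measurableSet_singleton 0)
  have hmul_int : ∀ (g : Ω → ℝ), Measurable g → (∀ ω, g ω ∈ Set.Icc (0:ℝ) 1) →
      ∀ (f : Ω → ℝ), Integrable f volume → Integrable (fun ω => g ω * f ω) volume := by
    intro g hg hg01 f hf
    exact hf.bdd_mul hg.aestronglyMeasurable (c := 1)
      (Eventually.of_forall fun ω => by rw [Real.norm_eq_abs, abs_of_nonneg (hg01 ω).1]; exact (hg01 ω).2)
  have hbdd_int : ∀ (g : Ω → ℝ), Measurable g → (∀ ω, g ω ∈ Set.Icc (0:ℝ) 1) →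
      Integrable g volume := by
    intro g hg hg01
    exact (integrable_const (1:ℝ)).mono' hg.aestronglyMeasurable
      (Filter.Eventually.of_forall fun ω => by
        rw [Real.norm_eq_abs, abs_of_nonneg (hg01 ω).1]; exact (hg01 ω).2)
  set τ : ℝ × (Fin N → ℝ) := ((1 - t) - (volume {ω | 0 < Z ω}).toReal,
    fun k => - ∫ ω in {ω | 0 < Z ω}, X ω k) with hτ
  set W : Set (ℝ × (Fin N → ℝ)) := {d | ∃ h : Ω → ℝ, Measurable h ∧
    (∀ ω, h ω ∈ Set.Icc (0:ℝ) 1) ∧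
    (∫ ω in {ω | Z ω = 0}, h ω) = d.1 ∧
    ∀ k, (∫ ω in {ω | Z ω = 0}, h ω * X ω k) = d.2 k} with hW
  suffices hτW : τ ∈ W by
    obtain ⟨h, h1, h2, h3, h4⟩ := hτW
    exact ⟨h, h1, h2, h3, fun k => by simpa using h4 k⟩
  have hWconv : Convex ℝ W := by
    intro d hd d' hd' p q hp hq hpq
    obtain ⟨f, hfm, hf01, hf1, hf2⟩ := hd
    obtain ⟨g, hgm, hg01, hg1, hg2⟩ := hd'
    refine ⟨fun ω => p * f ω + q * g ω, (hfm.const_mul p).add (hgm.const_mul q),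
      fun ω => ⟨by
        show (0:ℝ) ≤ p * f ω + q * g ω
        have h1 := mul_nonneg hp (hf01 ω).1
        have h2 := mul_nonneg hq (hg01 ω).1
        linarith, by
        show p * f ω + q * g ω ≤ 1
        have h1 := mul_le_mul_of_nonneg_left (hf01 ω).2 hp
        have h2 := mul_le_mul_of_nonneg_left (hg01 ω).2 hq
        linarith⟩, ?_, ?_⟩
    · rw [integral_add (((hbdd_int f hfm hf01).const_mul p).restrict)
        (((hbdd_int g hgm hg01).const_mul q).restrict), integral_const_mul, integral_const_mul,
        hf1, hg1]
      simp [Prod.fst_add, Prod.smul_fst, smul_eq_mul]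
    · intro k
      have e : (fun ω => (p * f ω + q * g ω) * X ω k)
          = fun ω => p * (f ω * X ω k) + q * (g ω * X ω k) := funext fun ω => by ring
      rw [e, integral_add (((hmul_int f hfm hf01 _ (hXk k)).const_mul p).restrict)
        (((hmul_int g hgm hg01 _ (hXk k)).const_mul q).restrict),
        integral_const_mul, integral_const_mul, hf2 k, hg2 k]
      simp [Prod.snd_add, Prod.smul_snd, smul_eq_mul]
  have hWclosed : IsClosed W := by
    refine IsSeqClosed.isClosed ?_
    intro dseq d hdseq hdconv
    choose hs hsm hs01 hs1 hs2 using hdseq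
    set U : Ultrafilter ℕ := Ultrafilter.of atTop with hU
    have hUle : (U : Filter ℕ) ≤ atTop := Ultrafilter.of_le _
    set G : ℕ → Ω → ℝ := fun m => Set.indicator {ω | Z ω = 0} (hs m) with hG
    have hGm : ∀ m, Measurable (G m) := fun m => (hsm m).indicator hS
    have hG01 : ∀ m ω, G m ω ∈ Set.Icc (0:ℝ) 1 := by
      intro m ω
      rw [hG]
      simp only [Set.indicator_apply]
      split
      · exact hs01 m ω
      · exact ⟨le_rfl, zero_le_one⟩
    obtain ⟨h, hm, hIcc, hT⟩ := stmt7_density U G hGm hG01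
    have hGint : ∀ (m : ℕ) (f : Ω → ℝ),
        (∫ ω, G m ω * f ω) = ∫ ω in {ω | Z ω = 0}, hs m ω * f ω := by
      intro m f
      have e : (fun ω => G m ω * f ω)
          = Set.indicator {ω | Z ω = 0} (fun ω => hs m ω * f ω) := by
        funext ω
        rw [hG]
        by_cases hω : ω ∈ {ω | Z ω = 0} <;>
          simp [Set.indicator_of_mem, Set.indicator_of_notMem, hω]
      rw [e, integral_indicator hS]
    -- identification of the limits
    have hc1 : (∫ ω, h ω * (1:ℝ)) = d.1 := by
      refine tendsto_nhds_unique (hT (fun _ => (1:ℝ)) (integrable_const 1)) ?_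
      have e : ∀ m, (∫ ω, G m ω * (1:ℝ)) = (dseq m).1 := by
        intro m
        rw [hGint m]
        simpa [mul_one] using hs1 m
      rw [funext e]
      exact ((continuous_fst.tendsto d).comp hdconv).mono_left hUle
    have hck : ∀ k, (∫ ω, h ω * X ω k) = d.2 k := by
      intro k
      refine tendsto_nhds_unique (hT (fun ω => X ω k) (hXk k)) ?_
      have e : ∀ m, (∫ ω, G m ω * X ω k) = (dseq m).2 k := by
        intro m
        rw [hGint m]
        exact hs2 m k
      rw [funext e]
      exact (((continuous_apply k).tendsto d.2).comp
        ((continuous_snd.tendsto d).comp hdconv)).mono_left hUle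
    -- h vanishes a.e. off {Z = 0}
    have hvan : ∀ᵐ ω ∂(volume : Measure Ω), ω ∈ {ω | Z ω = 0}ᶜ → h ω = 0 := by
      set f : Ω → ℝ := Set.indicator {ω | Z ω = 0}ᶜ (fun _ => 1) with hf
      have hfi : Integrable f volume := (integrable_const (1:ℝ)).indicator hS.compl
      have hzero : ∀ m, (∫ ω, G m ω * f ω) = 0 := by
        intro m
        have e : (fun ω => G m ω * f ω) = fun _ => (0:ℝ) := by
          funext ω
          rw [hG, hf]
          by_cases hω : ω ∈ {ω | Z ω = 0}
          · simp [Set.indicator_of_mem, Set.indicator_of_notMem, hω]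
          · simp [Set.indicator_of_mem, Set.indicator_of_notMem, hω]
        rw [e, integral_zero]
      have h0 : (∫ ω, h ω * f ω) = 0 := by
        refine tendsto_nhds_unique (hT f hfi) ?_
        rw [funext hzero]
        exact tendsto_const_nhds
      have e2 : (fun ω => h ω * f ω) = Set.indicator {ω | Z ω = 0}ᶜ h := by
        funext ω
        rw [hf]
        by_cases hω : ω ∈ {ω | Z ω = 0}ᶜ <;>
          simp [Set.indicator_of_mem, Set.indicator_of_notMem, hω]
      rw [e2, integral_indicator hS.compl] at h0
      have hae := (integral_eq_zero_iff_of_nonneg_ae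
        (Filter.Eventually.of_forall fun ω => (hIcc ω).1)
        ((hbdd_int h hm hIcc).restrict)).1 h0
      exact (ae_restrict_iff' hS.compl).1 hae
    set h' : Ω → ℝ := Set.indicator {ω | Z ω = 0} h with hh'
    have hh'ae : (h' : Ω → ℝ) =ᵐ[volume] h := by
      filter_upwards [hvan] with ω hω
      rw [hh']
      by_cases hωS : ω ∈ {ω | Z ω = 0}
      · rw [Set.indicator_of_mem hωS]
      · rw [Set.indicator_of_notMem hωS, hω hωS]
    have hh'm : Measurable h' := hm.indicator hS
    have hh'01 : ∀ ω, h' ω ∈ Set.Icc (0:ℝ) 1 := by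
      intro ω
      rw [hh']
      by_cases hωS : ω ∈ {ω | Z ω = 0}
      · rw [Set.indicator_of_mem hωS]; exact hIcc ω
      · rw [Set.indicator_of_notMem hωS]; exact ⟨le_rfl, zero_le_one⟩
    refine ⟨h', hh'm, hh'01, ?_, ?_⟩
    · have eA : (∫ ω in {ω | Z ω = 0}, h' ω) = ∫ ω in {ω | Z ω = 0}, h ω :=
        setIntegral_congr_fun hS (fun ω hω => by rw [hh', Set.indicator_of_mem hω])
      have eB : (∫ ω in {ω | Z ω = 0}, h ω) = ∫ ω, h' ω := by
        rw [hh']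
        exact (integral_indicator hS).symm
      have eC : (∫ ω, h' ω) = ∫ ω, h ω := integral_congr_ae hh'ae
      rw [eA, eB, eC, ← hc1]
      simp [mul_one]
    · intro k
      have e : (fun ω => h' ω * X ω k)
          = Set.indicator {ω | Z ω = 0} (fun ω => h ω * X ω k) := by
        funext ω
        rw [hh']
        by_cases hω : ω ∈ {ω | Z ω = 0} <;>
          simp [Set.indicator_of_mem, Set.indicator_of_notMem, hω]
      have eA : (∫ ω in {ω | Z ω = 0}, h' ω * X ω k)
          = ∫ ω in {ω | Z ω = 0}, h ω * X ω k :=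
        setIntegral_congr_fun hS (fun ω hω => by
          rw [hh', Set.indicator_of_mem hω])
      have eB : (∫ ω in {ω | Z ω = 0}, h ω * X ω k) = ∫ ω, h' ω * X ω k := by
        rw [e]
        exact (integral_indicator hS).symm
      have eC : (∫ ω, h' ω * X ω k) = ∫ ω, h ω * X ω k := by
        refine integral_congr_ae ?_
        filter_upwards [hh'ae] with ω hω
        rw [hω]
      rw [eA, eB, eC, hck k]
  -- separation argument
  by_contra hτW
  obtain ⟨φ, u, hφW, hφτ⟩ := geometric_hahn_banach_closed_point hWconv hWclosed hτW
  set α : ℝ := φ (1, 0) with hα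
  set β : Fin N → ℝ := fun k => φ (0, Pi.single k 1) with hβ
  have hφrep : ∀ d : ℝ × (Fin N → ℝ), φ d = α * d.1 + ∑ k, β k * d.2 k := by
    intro d
    have e1 : d = (d.1, (0 : Fin N → ℝ)) + ((0:ℝ), d.2) := by
      apply Prod.ext <;> simp
    have e2 : ((d.1, (0 : Fin N → ℝ))) = d.1 • ((1:ℝ), (0 : Fin N → ℝ)) := by
      apply Prod.ext <;> simp
    have e3 : φ ((0:ℝ), d.2) = ∑ k, β k * d.2 k := by
      have hrep := LinearMap.pi_apply_eq_sum_univ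
        ((φ.toLinearMap).comp (LinearMap.inr ℝ ℝ (Fin N → ℝ))) d.2
      simp only [LinearMap.comp_apply, LinearMap.inr_apply,
        ContinuousLinearMap.coe_coe] at hrep
      rw [hrep]
      refine Finset.sum_congr rfl fun k _ => ?_
      have e4 : (fun j => if k = j then (1:ℝ) else 0) = Pi.single k (1:ℝ) := by
        funext j
        rw [Pi.single_apply]
        by_cases hkj : k = j
        · subst hkj; simp
        · rw [if_neg hkj, if_neg (fun hh => hkj hh.symm)]
      rw [e4, smul_eq_mul, mul_comm]
    have e5 : φ d = d.1 * φ ((1:ℝ), (0 : Fin N → ℝ)) + φ ((0:ℝ), d.2) := by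
      conv_lhs => rw [e1]
      rw [map_add, e2, φ.map_smul, smul_eq_mul]
    rw [e5, e3, ← hα]
    ring
  set w : Ω → ℝ := fun ω => α + ∑ k, β k * X ω k with hwdef
  have hwm : Measurable w :=
    measurable_const.add (Finset.measurable_sum Finset.univ fun k _ => (hXkm k).const_mul (β k))
  have hwi : Integrable w volume :=
    (integrable_const α).add (integrable_finset_sum _ fun k _ => ((hXk k).const_mul (β k)))
  have hwset : MeasurableSet {ω | 0 < w ω} := measurableSet_lt measurable_const hwm
  set g0 : Ω → ℝ := Set.indicator {ω | 0 < w ω} (fun _ => 1) with hg0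
  have hg0m : Measurable g0 := measurable_const.indicator hwset
  have hg001 : ∀ ω, g0 ω ∈ Set.Icc (0:ℝ) 1 := by
    intro ω
    rw [hg0]
    by_cases hω : ω ∈ {ω | 0 < w ω}
    · rw [Set.indicator_of_mem hω]; exact ⟨zero_le_one, le_rfl⟩
    · rw [Set.indicator_of_notMem hω]; exact ⟨le_rfl, zero_le_one⟩
  have hd0 : ((∫ ω in {ω | Z ω = 0}, g0 ω),
      fun k => ∫ ω in {ω | Z ω = 0}, g0 ω * X ω k) ∈ W :=
    ⟨g0, hg0m, hg001, rfl, fun k => rfl⟩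
  -- compute φ at this point: it equals ∫_{Z=0} max (w ω) 0
  have hlin : ∀ (g : Ω → ℝ), Measurable g → (∀ ω, g ω ∈ Set.Icc (0:ℝ) 1) →
      α * (∫ ω in {ω | Z ω = 0}, g ω) + ∑ k, β k * ∫ ω in {ω | Z ω = 0}, g ω * X ω k
        = ∫ ω in {ω | Z ω = 0}, g ω * w ω := by
    intro g hg hg01
    have e : (fun ω => g ω * w ω)
        = fun ω => α * g ω + ∑ k, β k * (g ω * X ω k) := by
      funext ω
      rw [hwdef]
      have e1 : ∑ k, β k * (g ω * X ω k) = g ω * ∑ k, β k * X ω k := by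
        rw [Finset.mul_sum]
        exact Finset.sum_congr rfl fun k _ => by ring
      rw [e1]
      ring
    rw [e, integral_add (((hbdd_int g hg hg01).const_mul α).restrict) ?_,
      integral_const_mul, integral_finset_sum]
    · congr 1
      exact Finset.sum_congr rfl fun k _ => (integral_const_mul _ _).symm
    · intro k _
      exact ((hmul_int g hg hg01 _ (hXk k)).const_mul (β k)).restrict
    · exact (integrable_finset_sum _ fun k _ =>
        ((hmul_int g hg hg01 _ (hXk k)).const_mul (β k))).restrict
  have hφd0 : φ ((∫ ω in {ω | Z ω = 0}, g0 ω),
      fun k => ∫ ω in {ω | Z ω = 0}, g0 ω * X ω k)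
      = ∫ ω in {ω | Z ω = 0}, max (w ω) 0 := by
    rw [hφrep]
    have e0 : (fun ω => g0 ω * w ω) = fun ω => max (w ω) 0 := by
      funext ω
      rw [hg0]
      by_cases hω : ω ∈ {ω | 0 < w ω}
      · rw [Set.indicator_of_mem hω, one_mul, max_eq_left (le_of_lt hω)]
      · rw [Set.indicator_of_notMem hω, zero_mul,
          max_eq_right (not_lt.1 hω)]
    have := hlin g0 hg0m hg001
    rw [e0] at this
    simpa using this
  have hφτ' : φ τ = (1 - t) * α - ∫ ω in {ω | 0 < Z ω}, w ω := by
    rw [hφrep, hτ]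
    have e1 : (∫ ω in {ω | 0 < Z ω}, w ω)
        = α * (volume {ω | 0 < Z ω}).toReal
          + ∑ k, β k * ∫ ω in {ω | 0 < Z ω}, X ω k := by
      rw [hwdef]
      rw [integral_add ((integrable_const α).restrict)
        ((integrable_finset_sum _ fun k _ => ((hXk k).const_mul (β k))).restrict),
        integral_finset_sum _ (fun k _ => ((hXk k).const_mul (β k)).restrict)]
      simp only [integral_const, measureReal_def, Measure.restrict_apply_univ, smul_eq_mul]
      rw [mul_comm]
      congr 1
      exact Finset.sum_congr rfl fun k _ => integral_const_mul _ _
    simp only []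
    rw [e1]
    have : ∑ k, β k * -(∫ ω in {ω | 0 < Z ω}, X ω k)
        = - ∑ k, β k * ∫ ω in {ω | 0 < Z ω}, X ω k := by
      rw [← Finset.sum_neg_distrib]
      exact Finset.sum_congr rfl fun k _ => by ring
    rw [this]
    ring
  have hkey := key α β
  have hcontr1 : φ τ ≤ ∫ ω in {ω | Z ω = 0}, max (w ω) 0 := by
    rw [hφτ']
    rw [hwdef] at *
    linarith [hkey]
  have hc2 := hφW _ hd0
  rw [hφd0] at hc2
  linarith [hφτ, hcontr1, hc2]

/-- Complementary slackness for Koenker–Bassett: if `(a,b)` solves the primal and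
`V` the dual at level `t`, then a.s. `Y > a + bᵀX ⟹ V = 1` and `Y < a + bᵀX ⟹ V = 0`;
if moreover nonvertical hyperplanes are null, `V = 1_{Y > a + bᵀX}` a.s. -/
theorem stmt7 {Ω : Type*} [MeasureSpace Ω]
    [IsProbabilityMeasure (volume : Measure Ω)]
    {N : ℕ} (X : Ω → (Fin N → ℝ)) (Y : Ω → ℝ)
    (hX : Measurable X) (hYm : Measurable Y)
    (hXi : Integrable X) (hY : Integrable Y)
    (hEX : ∫ ω, X ω = 0)
    (t : ℝ) (ht : t ∈ Ioo (0:ℝ) 1)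
    (a : ℝ) (b : Fin N → ℝ)
    -- `(a,b)` solves the primal Koenker–Bassett problem
    (hprimal : ∀ (a' : ℝ) (b' : Fin N → ℝ),
        (∫ ω, max (Y ω - a - ∑ k, b k * X ω k) 0) + (1 - t) * a
          ≤ (∫ ω, max (Y ω - a' - ∑ k, b' k * X ω k) 0) + (1 - t) * a')
    (V : Ω → ℝ) (hV : Measurable V) (hV01 : ∀ ω, V ω ∈ Icc (0:ℝ) 1)
    (hVmean : (∫ ω, V ω) = 1 - t) (hVX : ∀ k, ∫ ω, V ω * X ω k = 0)
    -- `V` solves the dual problem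
    (hdual : ∀ V' : Ω → ℝ, Measurable V' → (∀ ω, V' ω ∈ Icc (0:ℝ) 1) →
        (∫ ω, V' ω) = 1 - t → (∀ k, ∫ ω, V' ω * X ω k = 0) →
        ∫ ω, V' ω * Y ω ≤ ∫ ω, V ω * Y ω) :
    (∀ᵐ ω ∂(volume : Measure Ω),
        (Y ω > a + ∑ k, b k * X ω k → V ω = 1) ∧
        (Y ω < a + ∑ k, b k * X ω k → V ω = 0))
    ∧ ((∀ (a' : ℝ) (b' : Fin N → ℝ),
          (volume : Measure Ω) {ω | Y ω = a' + ∑ k, b' k * X ω k} = 0) →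
        ∀ᵐ ω ∂(volume : Measure Ω),
          V ω = if Y ω > a + ∑ k, b k * X ω k then 1 else 0) := by
  classical
  set Z : Ω → ℝ := fun ω => Y ω - a - ∑ k, b k * X ω k with hZdef
  have hXk : ∀ k, Integrable (fun ω => X ω k) volume := stmt7_Xk X hX hXi
  have hXkm : ∀ k : Fin N, Measurable (fun ω => X ω k) :=
    fun k => (measurable_pi_apply k).comp hX
  have hZm : Measurable Z :=
    (hYm.sub measurable_const).sub
      (Finset.measurable_sum Finset.univ fun k _ => (hXkm k).const_mul (b k))
  have hZi : Integrable Z volume :=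
    (hY.sub (integrable_const a)).sub
      (integrable_finset_sum _ fun k _ => ((hXk k).const_mul (b k)))
  have hSpos : MeasurableSet {ω | 0 < Z ω} := measurableSet_lt measurable_const hZm
  have hS : MeasurableSet {ω | Z ω = 0} := hZm (measurableSet_singleton 0)
  have hbddint : ∀ (g : Ω → ℝ), Measurable g → (∀ ω, g ω ∈ Set.Icc (0:ℝ) 1) →
      Integrable g volume := by
    intro g hg hg01
    exact (integrable_const (1:ℝ)).mono' hg.aestronglyMeasurable
      (Filter.Eventually.of_forall fun ω => by
        rw [Real.norm_eq_abs, abs_of_nonneg (hg01 ω).1]; exact (hg01 ω).2)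
  have hmulbd : ∀ (g : Ω → ℝ), Measurable g → (∀ ω, g ω ∈ Set.Icc (0:ℝ) 1) →
      ∀ (f : Ω → ℝ), Integrable f volume → Integrable (fun ω => g ω * f ω) volume := by
    intro g hg hg01 f hf
    exact hf.bdd_mul hg.aestronglyMeasurable (c := 1)
      (Eventually.of_forall fun ω => by rw [Real.norm_eq_abs, abs_of_nonneg (hg01 ω).1]; exact (hg01 ω).2)
  -- existence of the density h on {Z = 0}
  have hkey := stmt7_key X Y hX hYm hXi hY t a b hprimal
  obtain ⟨h, hhm, hh01, hh1, hh2⟩ := stmt7_tau X Z hX hXi hZm t hkey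
  -- dual feasible competitor
  set V' : Ω → ℝ := fun ω => Set.indicator {ω | 0 < Z ω} (fun _ => (1:ℝ)) ω
    + Set.indicator {ω | Z ω = 0} h ω with hV'def
  have hV'm : Measurable V' :=
    (measurable_const.indicator hSpos).add (hhm.indicator hS)
  have hV'01 : ∀ ω, V' ω ∈ Set.Icc (0:ℝ) 1 := by
    intro ω
    show Set.indicator {ω | 0 < Z ω} (fun _ => (1:ℝ)) ω
      + Set.indicator {ω | Z ω = 0} h ω ∈ Set.Icc (0:ℝ) 1
    by_cases h1 : (0:ℝ) < Z ω
    · rw [Set.indicator_of_mem (show ω ∈ {ω | 0 < Z ω} from h1),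
        Set.indicator_of_notMem (show ω ∉ {ω | Z ω = 0} from fun hc => (ne_of_gt h1) hc)]
      norm_num
    · rw [Set.indicator_of_notMem (show ω ∉ {ω | 0 < Z ω} from h1)]
      by_cases h2 : Z ω = 0
      · rw [Set.indicator_of_mem (show ω ∈ {ω | Z ω = 0} from h2)]
        constructor
        · simpa using (hh01 ω).1
        · simpa using (hh01 ω).2
      · rw [Set.indicator_of_notMem (show ω ∉ {ω | Z ω = 0} from h2)]
        norm_num
  have hVZmax : ∀ ω, V' ω * Z ω = max (Z ω) 0 := by
    intro ω
    show (Set.indicator {ω | 0 < Z ω} (fun _ => (1:ℝ)) ω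
      + Set.indicator {ω | Z ω = 0} h ω) * Z ω = max (Z ω) 0
    by_cases h1 : (0:ℝ) < Z ω
    · rw [Set.indicator_of_mem (show ω ∈ {ω | 0 < Z ω} from h1),
        Set.indicator_of_notMem (show ω ∉ {ω | Z ω = 0} from fun hc => (ne_of_gt h1) hc),
        max_eq_left h1.le]
      ring
    · by_cases h2 : Z ω = 0
      · rw [Set.indicator_of_notMem (show ω ∉ {ω | 0 < Z ω} from h1), Set.indicator_of_mem (show ω ∈ {ω | Z ω = 0} from h2), h2]
        simp
      · have hneg : Z ω < 0 := lt_of_le_of_ne (not_lt.1 h1) h2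
        rw [Set.indicator_of_notMem (show ω ∉ {ω | 0 < Z ω} from h1), Set.indicator_of_notMem (show ω ∉ {ω | Z ω = 0} from h2),
          max_eq_right hneg.le]
        ring
  have hV'mean : (∫ ω, V' ω) = 1 - t := by
    have e : (∫ ω, V' ω) = (volume {ω | 0 < Z ω}).toReal
        + ∫ ω in {ω | Z ω = 0}, h ω := by
      have i1 : Integrable (fun ω => Set.indicator {ω | 0 < Z ω} (fun _ => (1:ℝ)) ω)
          volume := (integrable_const (1:ℝ)).indicator hSpos
      have i2 : Integrable (fun ω => Set.indicator {ω | Z ω = 0} h ω) volume :=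
        (hbddint h hhm hh01).indicator hS
      simp only [hV'def]
      rw [integral_add i1 i2, integral_indicator hSpos, integral_indicator hS]
      simp [Measure.restrict_apply_univ, measureReal_def]
    rw [e, hh1]
    ring
  have hV'X : ∀ k, (∫ ω, V' ω * X ω k) = 0 := by
    intro k
    have e : (fun ω => V' ω * X ω k)
        = fun ω => Set.indicator {ω | 0 < Z ω} (fun ω => X ω k) ω
          + Set.indicator {ω | Z ω = 0} (fun ω => h ω * X ω k) ω := by
      funext ω
      simp only [hV'def]
      by_cases h1 : (0:ℝ) < Z ω
      · rw [Set.indicator_of_mem (show ω ∈ {ω | 0 < Z ω} from h1), Set.indicator_of_mem (show ω ∈ {ω | 0 < Z ω} from h1),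
          Set.indicator_of_notMem (show ω ∉ {ω | Z ω = 0} from fun hc => (ne_of_gt h1) hc),
          Set.indicator_of_notMem (show ω ∉ {ω | Z ω = 0} from fun hc => (ne_of_gt h1) hc)]
        ring
      · rw [Set.indicator_of_notMem (show ω ∉ {ω | 0 < Z ω} from h1), Set.indicator_of_notMem (show ω ∉ {ω | 0 < Z ω} from h1)]
        by_cases h2 : Z ω = 0
        · rw [Set.indicator_of_mem (show ω ∈ {ω | Z ω = 0} from h2), Set.indicator_of_mem (show ω ∈ {ω | Z ω = 0} from h2)]
          ring
        · rw [Set.indicator_of_notMem (show ω ∉ {ω | Z ω = 0} from h2), Set.indicator_of_notMem (show ω ∉ {ω | Z ω = 0} from h2)]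
          ring
    rw [e, integral_add ((hXk k).indicator hSpos)
      ((hmulbd h hhm hh01 _ (hXk k)).indicator hS),
      integral_indicator hSpos, integral_indicator hS, hh2 k]
    ring
  -- expansion of the objective
  have hexp : ∀ (g : Ω → ℝ), Measurable g → (∀ ω, g ω ∈ Set.Icc (0:ℝ) 1) →
      (∫ ω, g ω * Y ω) = (∫ ω, g ω * Z ω) + a * (∫ ω, g ω)
        + ∑ k, b k * ∫ ω, g ω * X ω k := by
    intro g hg hg01
    have e : (fun ω => g ω * Y ω)
        = fun ω => g ω * Z ω + a * g ω + ∑ k, b k * (g ω * X ω k) := by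
      funext ω
      have e1 : ∑ k, b k * (g ω * X ω k) = g ω * ∑ k, b k * X ω k := by
        rw [Finset.mul_sum]
        exact Finset.sum_congr rfl fun k _ => by ring
      have hYe : Y ω = Z ω + a + ∑ k, b k * X ω k := by rw [hZdef]; ring
      rw [hYe, e1]
      ring
    have i1 : Integrable (fun ω => g ω * Z ω + a * g ω) volume :=
      (hmulbd g hg hg01 Z hZi).add ((hbddint g hg hg01).const_mul a)
    have i2 : Integrable (fun ω => ∑ k, b k * (g ω * X ω k)) volume :=
      integrable_finset_sum _ fun k _ => ((hmulbd g hg hg01 _ (hXk k)).const_mul (b k))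
    rw [e, integral_add i1 i2,
      integral_add (hmulbd g hg hg01 Z hZi) ((hbddint g hg hg01).const_mul a),
      integral_finset_sum _ (fun k _ => ((hmulbd g hg hg01 _ (hXk k)).const_mul (b k))),
      integral_const_mul]
    congr 1
    exact Finset.sum_congr rfl fun k _ => integral_const_mul _ _
  have hd := hdual V' hV'm hV'01 hV'mean hV'X
  have hEV'Y : (∫ ω, V' ω * Y ω) = (∫ ω, max (Z ω) 0) + a * (1 - t) := by
    rw [hexp V' hV'm hV'01, hV'mean]
    rw [show (fun ω => V' ω * Z ω) = fun ω => max (Z ω) 0 from funext hVZmax]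
    have hsz : ∑ k, b k * ∫ ω, V' ω * X ω k = 0 :=
      Finset.sum_eq_zero fun k _ => by rw [hV'X k, mul_zero]
    rw [hsz]
    ring
  have hEVY : (∫ ω, V ω * Y ω) = (∫ ω, V ω * Z ω) + a * (1 - t) := by
    rw [hexp V hV hV01, hVmean]
    have hsz : ∑ k, b k * ∫ ω, V ω * X ω k = 0 :=
      Finset.sum_eq_zero fun k _ => by rw [hVX k, mul_zero]
    rw [hsz]
    ring
  rw [hEV'Y, hEVY] at hd
  have hmaxle : (∫ ω, max (Z ω) 0) ≤ ∫ ω, V ω * Z ω := by linarith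
  have hptle : ∀ ω, V ω * Z ω ≤ max (Z ω) 0 := by
    intro ω
    rcases le_or_gt 0 (Z ω) with hz | hz
    · rw [max_eq_left hz]
      nlinarith [(hV01 ω).1, (hV01 ω).2]
    · rw [max_eq_right hz.le]
      exact mul_nonpos_of_nonneg_of_nonpos (hV01 ω).1 hz.le
  have hdint : Integrable (fun ω => max (Z ω) 0 - V ω * Z ω) volume :=
    hZi.pos_part.sub (hmulbd V hV hV01 Z hZi)
  have h0 : (∫ ω, (max (Z ω) 0 - V ω * Z ω)) = 0 := by
    refine le_antisymm ?_ (integral_nonneg fun ω => sub_nonneg.2 (hptle ω))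
    rw [integral_sub hZi.pos_part (hmulbd V hV hV01 Z hZi)]
    linarith
  have hae0 := (integral_eq_zero_iff_of_nonneg_ae
    (Filter.Eventually.of_forall fun ω => sub_nonneg.2 (hptle ω)) hdint).1 h0
  have part1 : ∀ᵐ ω ∂(volume : Measure Ω),
      (Y ω > a + ∑ k, b k * X ω k → V ω = 1) ∧
      (Y ω < a + ∑ k, b k * X ω k → V ω = 0) := by
    filter_upwards [hae0] with ω hω
    simp only [Pi.zero_apply] at hω
    constructor
    · intro hgt
      have hz : 0 < Z ω := by simp only [hZdef]; linarith
      rw [max_eq_left hz.le] at hω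
      refine mul_right_cancel₀ (ne_of_gt hz) ?_
      rw [one_mul]
      linarith
    · intro hlt
      have hz : Z ω < 0 := by simp only [hZdef]; linarith
      rw [max_eq_right hz.le] at hω
      have hVZ0 : V ω * Z ω = 0 := by linarith
      rcases mul_eq_zero.1 hVZ0 with hc | hc
      · exact hc
      · exact absurd hc (ne_of_lt hz)
  refine ⟨part1, ?_⟩
  intro hnull
  have hSnull : volume {ω | Z ω = 0} = 0 := by
    have hnab := hnull a b
    have e : {ω | Z ω = 0} = {ω | Y ω = a + ∑ k, b k * X ω k} := by
      ext ω
      simp only [hZdef, Set.mem_setOf_eq]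
      constructor <;> intro hh <;> linarith
    rw [e]
    exact hnab
  have hS0 : ∀ᵐ ω ∂(volume : Measure Ω), Z ω ≠ 0 := by
    rw [ae_iff]
    have e : {ω : Ω | ¬ Z ω ≠ 0} = {ω | Z ω = 0} := by
      ext ω
      simp [not_not]
    rw [e]
    exact hSnull
  filter_upwards [part1, hS0] with ω h1 h2
  by_cases hgt : Y ω > a + ∑ k, b k * X ω k
  · rw [if_pos hgt]
    exact h1.1 hgt
  · rw [if_neg hgt]
    refine h1.2 ?_
    have hne : Y ω ≠ a + ∑ k, b k * X ω k := by
      intro he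
      apply h2
      simp only [hZdef]
      linarith
    exact lt_of_le_of_ne (not_lt.1 hgt) hne
end

section
/- Assume quantile regression is quasi-specified: for each t there exist (α^{QR}(t), β^{QR}(t)) solving the normal equations P(Y > α + βᵀX) = 1−t and E[X·1_{{Y > α + βᵀX}}] = 0, with t ↦ (α^{QR}(t), β^{QR}(t)) continuous and t ↦ α^{QR}(t) + β^{QR}(t)ᵀx increasing for m-a.e. x. Define V_t^{QR} = 1_{{Y > α^{QR}(t) + β^{QR}(t)ᵀX}} and U^{QR} = ∫₀¹ V_t^{QR} dt. Then U^{QR} is uniformly distributed on [0,1]. -/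
open MeasureTheory Set

/-- Under quasi-specification, `U^{QR} = ∫₀¹ 1_{Y > α(t) + β(t)ᵀX} dt` is
uniformly distributed on `[0,1]`. -/
theorem stmt8 {Ω : Type*} [MeasureSpace Ω]
    [IsProbabilityMeasure (volume : Measure Ω)]
    {N : ℕ} (X : Ω → (Fin N → ℝ)) (Y : Ω → ℝ)
    (hX : Measurable X) (hYm : Measurable Y)
    (hXi : Integrable X) (hY : Integrable Y)
    (hEX : ∫ ω, X ω = 0)
    (hnonvert : ∀ (a : ℝ) (b : Fin N → ℝ),
        (volume : Measure Ω) {ω | Y ω = a + ∑ k, b k * X ω k} = 0)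
    (α : ℝ → ℝ) (β : ℝ → (Fin N → ℝ))
    (hαc : ContinuousOn α (Icc 0 1)) (hβc : ContinuousOn β (Icc 0 1))
    -- normal equations at each level `t`
    (hne1 : ∀ t ∈ Icc (0:ℝ) 1,
        ((volume : Measure Ω) {ω | Y ω > α t + ∑ k, β t k * X ω k}).toReal = 1 - t)
    (hne2 : ∀ t ∈ Icc (0:ℝ) 1, ∀ k,
        ∫ ω, X ω k * (if Y ω > α t + ∑ k, β t k * X ω k then (1:ℝ) else 0) = 0)
    -- monotonicity for `Law(X)`-a.e. `x`
    (hmon : ∀ᵐ x ∂(Measure.map X (volume : Measure Ω)),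
        StrictMonoOn (fun t => α t + ∑ k, β t k * x k) (Icc (0:ℝ) 1)) :
    Measure.map
        (fun ω => ∫ t in (0:ℝ)..1,
          if Y ω > α t + ∑ k, β t k * X ω k then (1:ℝ) else 0)
        (volume : Measure Ω)
      = volume.restrict (Icc (0:ℝ) 1) := by
  classical
  -- clamp `α`, `β` to globally continuous versions
  set proj : ℝ → ℝ := fun t => max 0 (min t 1) with hprojdef
  have hprojmem : ∀ t, proj t ∈ Icc (0:ℝ) 1 :=
    fun t => ⟨le_max_left _ _, max_le (by norm_num) (min_le_right _ _)⟩
  have hprojcont : Continuous proj := continuous_const.max (continuous_id.min continuous_const)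
  have hprojeq : ∀ t ∈ Icc (0:ℝ) 1, proj t = t := by
    intro t ht
    simp only [hprojdef]
    rw [min_eq_left ht.2, max_eq_right ht.1]
  set α' : ℝ → ℝ := fun t => α (proj t) with hα'def
  set β' : ℝ → Fin N → ℝ := fun t => β (proj t) with hβ'def
  have hα'c : Continuous α' := hαc.comp_continuous hprojcont hprojmem
  have hβ'c : Continuous β' := hβc.comp_continuous hprojcont hprojmem
  set g : ℝ → Ω → ℝ := fun t ω => α' t + ∑ k, β' t k * X ω k with hgdef
  have hgeq : ∀ t ∈ Icc (0:ℝ) 1, ∀ ω, g t ω = α t + ∑ k, β t k * X ω k := by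
    intro t ht ω
    simp only [hgdef, hα'def, hβ'def, hprojeq t ht]
  set U : Ω → ℝ := fun ω => ∫ t in (0:ℝ)..1, (if g t ω < Y ω then (1:ℝ) else 0) with hUdef
  have hUeq : (fun ω => ∫ t in (0:ℝ)..1,
      if Y ω > α t + ∑ k, β t k * X ω k then (1:ℝ) else 0) = U := by
    funext ω
    refine intervalIntegral.integral_congr ?_
    intro t ht
    rw [uIcc_of_le (by norm_num : (0:ℝ) ≤ 1)] at ht
    simp only [gt_iff_lt, hgeq t ht ω]
  -- continuity / measurability of g
  have hgcont : ∀ ω, Continuous (fun t => g t ω) := by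
    intro ω
    exact hα'c.add (continuous_finset_sum _ fun k _ =>
      ((continuous_apply k).comp hβ'c).mul continuous_const)
  have hgmeas : ∀ t, Measurable (g t) := by
    intro t
    exact measurable_const.add (Finset.measurable_sum _ fun k _ =>
      (measurable_const.mul ((measurable_pi_apply k).comp hX)))
  -- joint measurability of the indicator
  have hFmeas : Measurable (fun p : Ω × ℝ => if g p.2 p.1 < Y p.1 then (1:ℝ) else 0) := by
    have hgm : Measurable (fun p : Ω × ℝ => g p.2 p.1) := by
      refine Measurable.add ?_ ?_
      · exact hα'c.measurable.comp measurable_snd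
      · exact Finset.measurable_sum _ fun k _ =>
          (((continuous_apply k).comp hβ'c).measurable.comp measurable_snd).mul
            ((measurable_pi_apply k).comp (hX.comp measurable_fst))
    exact Measurable.ite (measurableSet_lt hgm (hYm.comp measurable_fst))
      measurable_const measurable_const
  -- measurability of U
  have hUmeas : Measurable U := by
    have h1 : StronglyMeasurable (fun ω => ∫ t, (if g t ω < Y ω then (1:ℝ) else 0)
        ∂(volume.restrict (Ioc (0:ℝ) 1))) :=
      (hFmeas.stronglyMeasurable).integral_prod_right'
    have : U = fun ω => ∫ t, (if g t ω < Y ω then (1:ℝ) else 0)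
        ∂(volume.restrict (Ioc (0:ℝ) 1)) := by
      funext ω
      rw [hUdef]
      exact intervalIntegral.integral_of_le (by norm_num)
    rw [this]
    exact h1.measurable
  -- interval integrability of the indicator
  have hint : ∀ ω, ∀ a b : ℝ,
      IntervalIntegrable (fun t => if g t ω < Y ω then (1:ℝ) else 0) volume a b := by
    intro ω a b
    have hm : Measurable (fun t => if g t ω < Y ω then (1:ℝ) else 0) := by
      refine Measurable.ite (measurableSet_lt (hgcont ω).measurable measurable_const)
        measurable_const measurable_const
    refine (intervalIntegrable_const (c := (1:ℝ))).mono_fun' hm.aestronglyMeasurable ?_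
    filter_upwards with t
    split <;> simp
  -- bounds on U
  have hU0 : ∀ ω, 0 ≤ U ω := by
    intro ω
    refine intervalIntegral.integral_nonneg (by norm_num) fun t _ => ?_
    split <;> norm_num
  have hU1 : ∀ ω, U ω ≤ 1 := by
    intro ω
    have := intervalIntegral.integral_mono_on (by norm_num : (0:ℝ) ≤ 1)
      (hint ω 0 1) intervalIntegrable_const
      (fun t _ => by split <;> norm_num : ∀ t ∈ Icc (0:ℝ) 1,
        (if g t ω < Y ω then (1:ℝ) else 0) ≤ 1)
    simpa using this
  -- key equivalence on the good set
  have key : ∀ u ∈ Ico (0:ℝ) 1, ∀ ω, StrictMonoOn (fun t => g t ω) (Icc 0 1) →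
      (u < U ω ↔ g u ω < Y ω) := by
    intro u hu ω hmono
    have huI : u ∈ Icc (0:ℝ) 1 := ⟨hu.1, hu.2.le⟩
    constructor
    · intro hUu
      by_contra hle
      push_neg at hle
      have h2 : (∫ t in u..1, (if g t ω < Y ω then (1:ℝ) else 0)) = 0 := by
        rw [intervalIntegral.integral_congr (g := fun _ => (0:ℝ)) ?_]
        · simp
        · intro t ht
          rw [uIcc_of_le hu.2.le] at ht
          have hnot : ¬ g t ω < Y ω := by
            rcases eq_or_lt_of_le ht.1 with h | h
            · rw [← h]; exact not_lt.mpr hle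
            · have hgt : g u ω < g t ω :=
                hmono huI ⟨hu.1.trans ht.1, ht.2⟩ h
              exact not_lt.mpr (hle.trans hgt.le)
          simp [hnot]
      have hsplit : (∫ t in (0:ℝ)..u, (if g t ω < Y ω then (1:ℝ) else 0))
          + (∫ t in u..1, (if g t ω < Y ω then (1:ℝ) else 0)) = U ω :=
        intervalIntegral.integral_add_adjacent_intervals (hint ω 0 u) (hint ω u 1)
      have h3 : (∫ t in (0:ℝ)..u, (if g t ω < Y ω then (1:ℝ) else 0))
          ≤ ∫ t in (0:ℝ)..u, (1:ℝ) := by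
        refine intervalIntegral.integral_mono_on hu.1 (hint ω 0 u)
          intervalIntegrable_const fun t _ => ?_
        split <;> norm_num
      have h4 : (∫ t in (0:ℝ)..u, (1:ℝ)) = u := by simp
      linarith
    · intro hYgt
      -- find t' ∈ (u, 1) with g t' ω < Y ω
      have hcont : ContinuousAt (fun t => g t ω) u := (hgcont ω).continuousAt
      have hev : ∀ᶠ t in nhds u, g t ω < Y ω :=
        hcont.eventually_lt continuousAt_const hYgt
      have hev' : ∀ᶠ t in nhdsWithin u (Ioi u), g t ω < Y ω ∧ t ∈ Ioo u 1 := by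
        refine Filter.Eventually.and (hev.filter_mono nhdsWithin_le_nhds) ?_
        exact Filter.eventually_of_mem (Ioo_mem_nhdsGT_of_mem ⟨le_refl u, hu.2⟩) fun t ht => ht
      obtain ⟨t', ht'Y, ht'mem⟩ := hev'.exists
      have ht'I : t' ∈ Icc (0:ℝ) 1 := ⟨hu.1.trans ht'mem.1.le, ht'mem.2.le⟩
      have h1 : (∫ t in (0:ℝ)..t', (if g t ω < Y ω then (1:ℝ) else 0)) = t' := by
        rw [intervalIntegral.integral_congr (g := fun _ => (1:ℝ)) ?_]
        · simp
        · intro t ht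
          rw [uIcc_of_le ht'I.1] at ht
          have htI : t ∈ Icc (0:ℝ) 1 := ⟨ht.1, ht.2.trans ht'I.2⟩
          have : g t ω ≤ g t' ω := hmono.monotoneOn htI ht'I ht.2
          simp [this.trans_lt ht'Y]
      have h2 : 0 ≤ ∫ t in t'..1, (if g t ω < Y ω then (1:ℝ) else 0) := by
        refine intervalIntegral.integral_nonneg ht'I.2 fun t _ => ?_
        split <;> norm_num
      have hsplit : (∫ t in (0:ℝ)..t', (if g t ω < Y ω then (1:ℝ) else 0))
          + (∫ t in t'..1, (if g t ω < Y ω then (1:ℝ) else 0)) = U ω :=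
        intervalIntegral.integral_add_adjacent_intervals (hint ω 0 t') (hint ω t' 1)
      have : t' ≤ U ω := by linarith
      exact ht'mem.1.trans_le this
  -- a.e. monotonicity in ω
  have hGae : ∀ᵐ ω ∂(volume : Measure Ω), StrictMonoOn (fun t => g t ω) (Icc 0 1) := by
    have h := ae_of_ae_map hX.aemeasurable hmon
    filter_upwards [h] with ω hω
    intro a ha b hb hab
    have := hω ha hb hab
    simpa only [hgeq a ha ω, hgeq b hb ω] using this
  -- measure of upper level sets
  have hmeasure_gt : ∀ u ∈ Ico (0:ℝ) 1,
      (volume : Measure Ω) {ω | u < U ω} = ENNReal.ofReal (1 - u) := by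
    intro u hu
    have huI : u ∈ Icc (0:ℝ) 1 := ⟨hu.1, hu.2.le⟩
    have hae : {ω | u < U ω} =ᵐ[(volume : Measure Ω)] {ω | g u ω < Y ω} := by
      rw [Filter.eventuallyEq_set]
      filter_upwards [hGae] with ω hω
      exact key u hu ω hω
    rw [measure_congr hae]
    have hset : {ω | g u ω < Y ω} = {ω | Y ω > α u + ∑ k, β u k * X ω k} := by
      ext ω
      simp only [mem_setOf_eq, gt_iff_lt, hgeq u huI ω]
    rw [hset, ← ENNReal.ofReal_toReal (measure_ne_top _ _), hne1 u huI]
  rw [hUeq]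
  refine Measure.ext_of_Iic _ _ fun a => ?_
  rw [Measure.map_apply hUmeas measurableSet_Iic, Measure.restrict_apply measurableSet_Iic]
  rcases lt_or_ge a 0 with ha | ha
  · have h1 : U ⁻¹' Iic a = ∅ := by
      ext ω
      simp only [mem_preimage, mem_Iic, mem_empty_iff_false, iff_false, not_le]
      exact ha.trans_le (hU0 ω)
    have h2 : Iic a ∩ Icc (0:ℝ) 1 = ∅ := by
      ext t
      simp only [mem_inter_iff, mem_Iic, mem_Icc, mem_empty_iff_false, iff_false]
      rintro ⟨h, h0, -⟩
      linarith
    simp [h1, h2]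
  rcases lt_or_ge a 1 with ha1 | ha1
  · -- 0 ≤ a < 1
    have hcompl : U ⁻¹' Iic a = {ω | a < U ω}ᶜ := by
      ext ω; simp [not_lt]
    have hms : MeasurableSet {ω | a < U ω} := measurableSet_lt measurable_const hUmeas
    rw [hcompl, measure_compl hms (measure_ne_top _ _), measure_univ,
      hmeasure_gt a ⟨ha, ha1⟩]
    have h2 : Iic a ∩ Icc (0:ℝ) 1 = Icc 0 a := by
      ext t
      simp only [mem_inter_iff, mem_Iic, mem_Icc]
      constructor
      · rintro ⟨h, h0, -⟩; exact ⟨h0, h⟩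
      · rintro ⟨h0, h⟩; exact ⟨h, h0, h.trans ha1.le⟩
    rw [h2, Real.volume_Icc]
    rw [show (1:ENNReal) = ENNReal.ofReal 1 by simp, ← ENNReal.ofReal_sub _ (by linarith)]
    norm_num
  · -- a ≥ 1
    have h1 : U ⁻¹' Iic a = univ := by
      ext ω
      simp only [mem_preimage, mem_Iic, mem_univ, iff_true]
      exact (hU1 ω).trans ha1
    have h2 : Iic a ∩ Icc (0:ℝ) 1 = Icc 0 1 := by
      ext t
      simp only [mem_inter_iff, mem_Iic, mem_Icc]
      exact ⟨fun h => h.2, fun h => ⟨h.2.trans ha1, h⟩⟩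
    rw [h1, h2, measure_univ, Real.volume_Icc]
    norm_num
end

section
/- Under quasi-specification (as above), the random variable U^{QR} = ∫₀¹ 1_{{Y > α^{QR}(t) + β^{QR}(t)ᵀX}} dt satisfies: X is mean-independent of U^{QR} (i.e. E[X | U^{QR}] = E[X] = 0), and Y = α^{QR}(U^{QR}) + β^{QR}(U^{QR})ᵀX almost surely. -/
open MeasureTheory Set

/-- Under quasi-specification, with `U^{QR} = ∫₀¹ 1_{Y > α(t) + β(t)ᵀX} dt`,
`X` is mean-independent of `U^{QR}` and `Y = α(U^{QR}) + β(U^{QR})ᵀX` a.s. -/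
theorem stmt9 {Ω : Type*} [MeasureSpace Ω]
    [IsProbabilityMeasure (volume : Measure Ω)]
    {N : ℕ} (X : Ω → (Fin N → ℝ)) (Y : Ω → ℝ)
    (hX : Measurable X) (hYm : Measurable Y)
    (hXi : Integrable X) (hY : Integrable Y)
    (hEX : ∫ ω, X ω = 0)
    (hnonvert : ∀ (a : ℝ) (b : Fin N → ℝ),
        (volume : Measure Ω) {ω | Y ω = a + ∑ k, b k * X ω k} = 0)
    (α : ℝ → ℝ) (β : ℝ → (Fin N → ℝ))
    (hαc : ContinuousOn α (Icc 0 1)) (hβc : ContinuousOn β (Icc 0 1))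
    (hne1 : ∀ t ∈ Icc (0:ℝ) 1,
        ((volume : Measure Ω) {ω | Y ω > α t + ∑ k, β t k * X ω k}).toReal = 1 - t)
    (hne2 : ∀ t ∈ Icc (0:ℝ) 1, ∀ k,
        ∫ ω, X ω k * (if Y ω > α t + ∑ k, β t k * X ω k then (1:ℝ) else 0) = 0)
    (hmon : ∀ᵐ x ∂(Measure.map X (volume : Measure Ω)),
        StrictMonoOn (fun t => α t + ∑ k, β t k * x k) (Icc (0:ℝ) 1))
    (U : Ω → ℝ)
    (hU : ∀ ω, U ω = ∫ t in (0:ℝ)..1,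
        if Y ω > α t + ∑ k, β t k * X ω k then (1:ℝ) else 0) :
    (∀ k, (volume : Measure Ω)[(fun ω => X ω k)
        | MeasurableSpace.comap U inferInstance] =ᵐ[(volume : Measure Ω)] 0)
    ∧ ∀ᵐ ω ∂(volume : Measure Ω), Y ω = α (U ω) + ∑ k, β (U ω) k * X ω k := by
  classical
  set μ : Measure Ω := volume with hμdef
  -- measurability of ω ↦ α t + ∑ k, β t k * X ω k for each fixed t
  have hgm : ∀ t : ℝ, Measurable fun ω => α t + ∑ k, β t k * X ω k := fun t =>
    measurable_const.add (Finset.measurable_sum _ fun k _ =>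
      measurable_const.mul ((measurable_pi_apply k).comp hX))
  -- transfer monotonicity to Ω
  have hmonΩ : ∀ᵐ ω ∂μ,
      StrictMonoOn (fun t => α t + ∑ k, β t k * X ω k) (Icc (0:ℝ) 1) :=
    ae_of_ae_map hX.aemeasurable hmon
  -- a.e. Y > value at 0
  have h0 : ∀ᵐ ω ∂μ, α 0 + ∑ k, β 0 k * X ω k < Y ω := by
    have hms : MeasurableSet {ω | Y ω > α 0 + ∑ k, β 0 k * X ω k} :=
      measurableSet_lt (hgm 0) hYm
    have h1 : (μ {ω | Y ω > α 0 + ∑ k, β 0 k * X ω k}).toReal = 1 := by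
      simpa using hne1 0 ⟨le_refl _, zero_le_one⟩
    have hμ1 : μ {ω | Y ω > α 0 + ∑ k, β 0 k * X ω k} = 1 :=
      (ENNReal.toReal_eq_one_iff _).mp h1
    have hc : μ {ω | Y ω > α 0 + ∑ k, β 0 k * X ω k}ᶜ = 0 :=
      (prob_compl_eq_zero_iff hms).mpr hμ1
    have := measure_eq_zero_iff_ae_notMem.mp hc
    filter_upwards [this] with ω hω
    simpa using hω
  -- a.e. Y < value at 1
  have h1 : ∀ᵐ ω ∂μ, Y ω < α 1 + ∑ k, β 1 k * X ω k := by
    have h10 : (μ {ω | Y ω > α 1 + ∑ k, β 1 k * X ω k}).toReal = 0 := by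
      simpa using hne1 1 ⟨zero_le_one, le_refl _⟩
    have hμ0 : μ {ω | Y ω > α 1 + ∑ k, β 1 k * X ω k} = 0 := by
      rcases (ENNReal.toReal_eq_zero_iff _).mp h10 with h | h
      · exact h
      · exact absurd h (measure_ne_top _ _)
    have hle := measure_eq_zero_iff_ae_notMem.mp hμ0
    have hne := measure_eq_zero_iff_ae_notMem.mp (hnonvert (α 1) (β 1))
    filter_upwards [hle, hne] with ω hω hωne
    have h1 : ¬ (α 1 + ∑ k, β 1 k * X ω k < Y ω) := by simpa using hω
    have h2 : Y ω ≠ α 1 + ∑ k, β 1 k * X ω k := by simpa using hωne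
    exact lt_of_le_of_ne (not_lt.mp h1) h2
  -- the key pointwise statement
  have key : ∀ᵐ ω ∂μ, U ω ∈ Ioo (0:ℝ) 1 ∧
      Y ω = α (U ω) + ∑ k, β (U ω) k * X ω k ∧
      ∀ t ∈ Icc (0:ℝ) 1,
        ((α t + ∑ k, β t k * X ω k < Y ω) ↔ t < U ω) := by
    filter_upwards [hmonΩ, h0, h1] with ω hmono hc0 hc1
    set G : ℝ → ℝ := fun t => α t + ∑ k, β t k * X ω k with hGdef
    have hGc : ContinuousOn G (Icc 0 1) := by
      apply hαc.add
      exact continuousOn_finset_sum _ fun k _ =>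
        ((continuous_apply k).comp_continuousOn hβc).mul continuousOn_const
    obtain ⟨s, hs, hsY⟩ : ∃ s ∈ Ioo (0:ℝ) 1, G s = Y ω := by
      have := intermediate_value_Ioo zero_le_one hGc (a := 0) (b := 1)
      have hmem : Y ω ∈ Ioo (G 0) (G 1) := ⟨hc0, hc1⟩
      obtain ⟨s, hs, hsY⟩ := this hmem
      exact ⟨s, hs, hsY⟩
    have hsIcc : s ∈ Icc (0:ℝ) 1 := ⟨hs.1.le, hs.2.le⟩
    have hiff : ∀ t ∈ Icc (0:ℝ) 1, (G t < Y ω ↔ t < s) := by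
      intro t ht
      constructor
      · intro h
        by_contra hns
        have hle : s ≤ t := not_lt.mp hns
        have : G s ≤ G t := hmono.monotoneOn hsIcc ht hle
        rw [hsY] at this
        exact absurd h (not_lt.mpr this)
      · intro h
        have : G t < G s := hmono ht hsIcc h
        rwa [hsY] at this
    have hUs : U ω = s := by
      have hsne : ∀ᵐ (t : ℝ), t ≠ s := by
        rw [ae_iff]
        simpa using measure_singleton s
      have hcong : ∀ᵐ (t : ℝ), t ∈ Set.uIoc (0:ℝ) 1 →
          (if Y ω > α t + ∑ k, β t k * X ω k then (1:ℝ) else 0)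
            = Set.indicator {x : ℝ | x ≤ s} (fun _ => (1:ℝ)) t := by
        filter_upwards [hsne] with t hts hmem
        rw [Set.uIoc_of_le zero_le_one] at hmem
        have htIcc : t ∈ Icc (0:ℝ) 1 := ⟨hmem.1.le, hmem.2⟩
        by_cases hlt : t < s
        · rw [if_pos ((hiff t htIcc).mpr hlt),
            Set.indicator_of_mem (by exact hlt.le : t ∈ {x : ℝ | x ≤ s})]
        · have hnle : t ∉ {x : ℝ | x ≤ s} := by
            intro hle
            exact hlt (lt_of_le_of_ne hle hts)
          rw [if_neg (fun hY => hlt ((hiff t htIcc).mp hY)),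
            Set.indicator_of_notMem hnle]
      calc U ω = ∫ t in (0:ℝ)..1,
            Set.indicator {x : ℝ | x ≤ s} (fun _ => (1:ℝ)) t := by
              rw [hU ω]; exact intervalIntegral.integral_congr_ae hcong
        _ = ∫ _ in (0:ℝ)..s, (1:ℝ) := intervalIntegral.integral_indicator hsIcc
        _ = s := by simp
    refine ⟨hUs ▸ hs, ?_, ?_⟩
    · rw [hUs]; exact hsY.symm
    · intro t ht
      rw [hUs]
      exact hiff t ht
  constructor
  · -- mean independence
    intro k
    by_cases hm : MeasurableSpace.comap U inferInstance ≤
        (inferInstance : MeasurableSpace Ω)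
    swap
    · rw [condExp_of_not_le hm]
    have hUmeas : Measurable U := measurable_iff_comap_le.mpr hm
    set L : (Fin N → ℝ) →L[ℝ] ℝ := ContinuousLinearMap.proj k with hLdef
    have hXk : Integrable (fun ω => X ω k) μ := L.integrable_comp hXi
    have hEXk : ∫ ω, X ω k ∂μ = 0 := by
      have h := L.integral_comp_comm hXi
      have : ∫ ω, X ω k ∂μ = L (∫ ω, X ω ∂μ) := h
      rw [this, hEX, map_zero]
    -- key: integrals over {U > a} all vanish
    have hIoi : ∀ a : ℝ, ∫ ω in U ⁻¹' Ioi a, X ω k ∂μ = 0 := by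
      intro a
      rcases lt_or_ge a 0 with ha | ha
      · have hms : MeasurableSet (U ⁻¹' Ioi a) := hUmeas measurableSet_Ioi
        have hcompl : μ (U ⁻¹' Ioi a)ᶜ = 0 := by
          have hmem : ∀ᵐ ω ∂μ, ω ∈ U ⁻¹' Ioi a :=
            key.mono fun ω h => lt_trans ha h.1.1
          rw [ae_iff] at hmem
          simpa [Set.compl_def] using hmem
        have hadd := integral_add_compl hms hXk (f := fun ω => X ω k)
        have hz : ∫ ω in (U ⁻¹' Ioi a)ᶜ, X ω k ∂μ = 0 := by
          rw [Measure.restrict_eq_zero.mpr hcompl]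
          exact integral_zero_measure _
        rw [hz, add_zero] at hadd
        rw [hadd, hEXk]
      rcases lt_or_ge a 1 with ha1 | ha1
      · have haI : a ∈ Icc (0:ℝ) 1 := ⟨ha, ha1.le⟩
        have hseteq : U ⁻¹' Ioi a
            =ᵐ[μ] {ω | Y ω > α a + ∑ k, β a k * X ω k} := by
          rw [Filter.eventuallyEq_set]
          filter_upwards [key] with ω h
          simp only [Set.mem_preimage, Set.mem_Ioi, Set.mem_setOf_eq]
          exact ⟨fun hlt => (h.2.2 a haI).mpr hlt, fun hY => (h.2.2 a haI).mp hY⟩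
        rw [setIntegral_congr_set hseteq]
        have hmsA : MeasurableSet {ω | Y ω > α a + ∑ k, β a k * X ω k} :=
          measurableSet_lt (hgm a) hYm
        rw [← hne2 a haI k, ← integral_indicator hmsA]
        congr 1
        ext ω
        by_cases h : Y ω > α a + ∑ k, β a k * X ω k
        · simp [Set.indicator_apply, Set.mem_setOf_eq, h]
        · simp [Set.indicator_apply, Set.mem_setOf_eq, h]
      · have hnull : μ (U ⁻¹' Ioi a) = 0 := by
          have hmem : ∀ᵐ ω ∂μ, ω ∉ U ⁻¹' Ioi a :=
            key.mono fun ω h hc =>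
              absurd hc (not_lt.mpr (le_trans h.1.2.le ha1))
          exact measure_eq_zero_iff_ae_notMem.mpr hmem
        rw [Measure.restrict_eq_zero.mpr hnull]
        exact integral_zero_measure _
    -- by a π-system argument, integrals over all U-measurable sets vanish
    have hall : ∀ B : Set ℝ, MeasurableSet B →
        ∫ ω in U ⁻¹' B, X ω k ∂μ = 0 := by
      intro B hB
      refine MeasurableSpace.induction_on_inter
        (C := fun B _ => ∫ ω in U ⁻¹' B, X ω k ∂μ = 0)
        (borel_eq_generateFrom_Ioi ℝ ▸ (BorelSpace.measurable_eq (α := ℝ)))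
        isPiSystem_Ioi ?_ ?_ ?_ ?_ B hB
      · simp
      · rintro t ⟨a, rfl⟩
        exact hIoi a
      · intro t ht hC
        have hms : MeasurableSet (U ⁻¹' t) := hUmeas ht
        have hadd := integral_add_compl hms hXk (f := fun ω => X ω k)
        rw [hC, zero_add, hEXk] at hadd
        rw [Set.preimage_compl]
        exact hadd
      · intro f hdisj hf hC
        rw [Set.preimage_iUnion,
          integral_iUnion (fun i => hUmeas (hf i))
            (fun i j hij => (hdisj hij).preimage U) hXk.integrableOn]
        simp [hC]
    -- conclude by uniqueness of conditional expectation
    haveI : SigmaFinite (μ.trim hm) := by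
      have : IsFiniteMeasure (μ.trim hm) := isFiniteMeasure_trim hm
      infer_instance
    have hres := ae_eq_condExp_of_forall_setIntegral_eq hm hXk
      (g := fun _ => (0:ℝ))
      (fun s _ _ => (integrable_zero _ _ _).integrableOn)
      (fun s hs _ => by
        obtain ⟨B, hB, rfl⟩ := MeasurableSpace.measurableSet_comap.mp hs
        rw [hall B hB]
        simp)
      (StronglyMeasurable.aestronglyMeasurable
        (@stronglyMeasurable_const Ω ℝ _ _ 0))
    exact hres.symm
  · -- Y = α(U) + β(U)ᵀX a.s.
    filter_upwards [key] with ω h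
    exact h.2.1
end

section
/- Under quasi-specification, the random variable U^{QR} = ∫₀¹ V_t^{QR} dt solves the correlation maximization problem with mean-independence constraint: it maximizes E[VY] over all V uniformly distributed on [0,1] with E[X | V] = 0. -/
open MeasureTheory Set

lemma kb_opt {Ω : Type*} [MeasureSpace Ω]
    [IsProbabilityMeasure (volume : Measure Ω)]
    {N : ℕ} (X : Ω → (Fin N → ℝ)) (Y : Ω → ℝ)
    (hX : Measurable X) (hYm : Measurable Y)
    (hXi : Integrable X) (hY : Integrable Y)
    (a : ℝ) (b : Fin N → ℝ) (t : ℝ)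
    (h1 : ((volume : Measure Ω) {ω | Y ω > a + ∑ k, b k * X ω k}).toReal = 1 - t)
    (h2 : ∀ k, ∫ ω, X ω k * (if Y ω > a + ∑ k, b k * X ω k then (1:ℝ) else 0) = 0)
    (W : Ω → ℝ) (hWm : Measurable W) (hW01 : ∀ ω, W ω ∈ Icc (0:ℝ) 1)
    (hWe : ∫ ω, W ω = 1 - t) (hWX : ∀ k, ∫ ω, X ω k * W ω = 0) :
    ∫ ω, W ω * Y ω ≤ ∫ ω, (if Y ω > a + ∑ k, b k * X ω k then (1:ℝ) else 0) * Y ω := by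
  set g : Ω → ℝ := fun ω => a + ∑ k, b k * X ω k with hg_def
  have hgm : Measurable g :=
    measurable_const.add (Finset.measurable_sum _ fun k _ =>
      ((measurable_pi_apply k).comp hX).const_mul (b k))
  set I : Ω → ℝ := fun ω => if Y ω > g ω then 1 else 0 with hI_def
  have hIm : Measurable I := Measurable.ite (measurableSet_lt hgm hYm) measurable_const
    measurable_const
  have hI01 : ∀ ω, I ω ∈ Icc (0:ℝ) 1 := by
    intro ω; by_cases h : Y ω > g ω <;> simp [hI_def, h]
  have hXk : ∀ k, Integrable (fun ω => X ω k) := fun k =>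
    hXi.norm.mono' ((measurable_pi_apply k).comp hX).aestronglyMeasurable
      (ae_of_all _ fun ω => norm_le_pi_norm (X ω) k)
  have hgInt : Integrable g := (integrable_const a).add
    (integrable_finset_sum _ fun k _ => ((hXk k).const_mul (b k)))
  have hbd : ∀ (W : Ω → ℝ), Measurable W → (∀ ω, W ω ∈ Icc (0:ℝ) 1) →
      ∀ (Z : Ω → ℝ), Integrable Z → Integrable (fun ω => W ω * Z ω) := by
    intro W hWm hW01 Z hZ
    exact hZ.bdd_mul hWm.aestronglyMeasurable
      (c := 1) (ae_of_all _ fun ω => by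
        rw [Real.norm_eq_abs]; exact abs_le.mpr ⟨by linarith [(hW01 ω).1], (hW01 ω).2⟩)
  have hWY : Integrable (fun ω => W ω * Y ω) := hbd W hWm hW01 Y hY
  have hIY : Integrable (fun ω => I ω * Y ω) := hbd I hIm hI01 Y hY
  have hWg : Integrable (fun ω => W ω * g ω) := hbd W hWm hW01 g hgInt
  have hIg : Integrable (fun ω => I ω * g ω) := hbd I hIm hI01 g hgInt
  -- integral of I
  have hIe : ∫ ω, I ω = 1 - t := by
    have : I = Set.indicator {ω | Y ω > g ω} (fun _ => (1:ℝ)) := by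
      funext ω; by_cases h : Y ω > g ω <;>
        simp [hI_def, h, Set.indicator_of_mem, Set.indicator_of_notMem, Set.mem_setOf_eq]
    rw [this, integral_indicator_const _ (measurableSet_lt hgm hYm)]
    simpa [Measure.real] using h1
  have hIX : ∀ k, ∫ ω, X ω k * I ω = 0 := h2
  -- mixed integrals
  have hmix : ∀ (W : Ω → ℝ), Measurable W → (∀ ω, W ω ∈ Icc (0:ℝ) 1) →
      (∫ ω, W ω = 1 - t) → (∀ k, ∫ ω, X ω k * W ω = 0) →
      ∫ ω, W ω * g ω = a * (1 - t) := by
    intro W hWm hW01 hWe hWX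
    have hWi : Integrable W := (integrable_const (1:ℝ)).mono' hWm.aestronglyMeasurable
      (ae_of_all _ fun ω => abs_le.mpr ⟨by linarith [(hW01 ω).1], (hW01 ω).2⟩)
    have hXW : ∀ k, Integrable (fun ω => X ω k * W ω) := by
      intro k; simpa [mul_comm] using hbd W hWm hW01 _ (hXk k)
    have heq : (fun ω => W ω * g ω) =
        fun ω => a * W ω + ∑ k, b k * (X ω k * W ω) := by
      funext ω
      simp only [hg_def, mul_add, Finset.mul_sum]
      congr 1
      · ring
      · exact Finset.sum_congr rfl fun k _ => by ring
    rw [heq, integral_add (hWi.const_mul a)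
        (integrable_finset_sum _ fun k _ => (hXW k).const_mul (b k)),
      integral_const_mul, hWe,
      integral_finset_sum _ (fun k _ => (hXW k).const_mul (b k))]
    simp [integral_const_mul, hWX]
  have hWgeq := hmix W hWm hW01 hWe hWX
  have hIgeq := hmix I hIm hI01 hIe hIX
  have hpt : ∀ ω, (W ω - I ω) * (Y ω - g ω) ≤ 0 := by
    intro ω
    by_cases h : Y ω > g ω
    · have hI1 : I ω = 1 := if_pos h
      rw [hI1]; nlinarith [(hW01 ω).2, h]
    · have hI0 : I ω = 0 := if_neg h
      rw [hI0]; push_neg at h; nlinarith [(hW01 ω).1, h]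
  have hnonpos : ∫ ω, (W ω - I ω) * (Y ω - g ω) ≤ 0 := integral_nonpos hpt
  have hexp : (fun ω => (W ω - I ω) * (Y ω - g ω)) =
      fun ω => (W ω * Y ω - W ω * g ω) - (I ω * Y ω - I ω * g ω) := by
    funext ω; ring
  rw [hexp] at hnonpos
  have e1 : ∫ ω, ((W ω * Y ω - W ω * g ω) - (I ω * Y ω - I ω * g ω)) =
      (∫ ω, (W ω * Y ω - W ω * g ω)) - ∫ ω, (I ω * Y ω - I ω * g ω) :=
    integral_sub (hWY.sub hWg) (hIY.sub hIg)
  have e2 : ∫ ω, (W ω * Y ω - W ω * g ω) =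
      (∫ ω, W ω * Y ω) - ∫ ω, W ω * g ω := integral_sub hWY hWg
  have e3 : ∫ ω, (I ω * Y ω - I ω * g ω) =
      (∫ ω, I ω * Y ω) - ∫ ω, I ω * g ω := integral_sub hIY hIg
  rw [e1, e2, e3] at hnonpos
  linarith

/-- Under quasi-specification, with `U^{QR} = ∫₀¹ 1_{Y > α(t) + β(t)ᵀX} dt`,
`X` is mean-independent of `U^{QR}` and `Y = α(U^{QR}) + β(U^{QR})ᵀX` a.s. -/
theorem stmt10 {Ω : Type*} [MeasureSpace Ω]
    [IsProbabilityMeasure (volume : Measure Ω)]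
    {N : ℕ} (X : Ω → (Fin N → ℝ)) (Y : Ω → ℝ)
    (hX : Measurable X) (hYm : Measurable Y)
    (hXi : Integrable X) (hY : Integrable Y)
    (hEX : ∫ ω, X ω = 0)
    (hnonvert : ∀ (a : ℝ) (b : Fin N → ℝ),
        (volume : Measure Ω) {ω | Y ω = a + ∑ k, b k * X ω k} = 0)
    (α : ℝ → ℝ) (β : ℝ → (Fin N → ℝ))
    (hαc : ContinuousOn α (Icc 0 1)) (hβc : ContinuousOn β (Icc 0 1))
    (hne1 : ∀ t ∈ Icc (0:ℝ) 1,
        ((volume : Measure Ω) {ω | Y ω > α t + ∑ k, β t k * X ω k}).toReal = 1 - t)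
    (hne2 : ∀ t ∈ Icc (0:ℝ) 1, ∀ k,
        ∫ ω, X ω k * (if Y ω > α t + ∑ k, β t k * X ω k then (1:ℝ) else 0) = 0)
    (hmon : ∀ᵐ x ∂(Measure.map X (volume : Measure Ω)),
        StrictMonoOn (fun t => α t + ∑ k, β t k * x k) (Icc (0:ℝ) 1))
    (U : Ω → ℝ)
    (hU : ∀ ω, U ω = ∫ t in (0:ℝ)..1,
        if Y ω > α t + ∑ k, β t k * X ω k then (1:ℝ) else 0) :
    ∀ V : Ω → ℝ, Measurable V →
      Measure.map V (volume : Measure Ω) = volume.restrict (Icc (0:ℝ) 1) →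
      (∀ k, (volume : Measure Ω)[(fun ω => X ω k)
          | MeasurableSpace.comap V inferInstance] =ᵐ[(volume : Measure Ω)] 0) →
      ∫ ω, V ω * Y ω ≤ ∫ ω, U ω * Y ω := by
  intro V hV hmap hMI
  -- clamped extensions of α and β
  set cl : ℝ → ℝ := fun s => max 0 (min 1 s) with hcl_def
  have hcl_cont : Continuous cl := continuous_const.max (continuous_const.min continuous_id)
  have hcl_mem : ∀ s, cl s ∈ Icc (0:ℝ) 1 :=
    fun s => ⟨le_max_left _ _, max_le zero_le_one (min_le_left _ _)⟩
  have hcl_eq : ∀ s ∈ Icc (0:ℝ) 1, cl s = s := by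
    intro s hs
    simp [hcl_def, min_eq_right hs.2, max_eq_right hs.1]
  set αe : ℝ → ℝ := fun s => α (cl s) with hαe_def
  set βe : ℝ → (Fin N → ℝ) := fun s => β (cl s) with hβe_def
  have hαe_cont : Continuous αe := hαc.comp_continuous hcl_cont hcl_mem
  have hβe_cont : Continuous βe := hβc.comp_continuous hcl_cont hcl_mem
  have hαeq : ∀ s ∈ Icc (0:ℝ) 1, αe s = α s := fun s hs => by rw [hαe_def]; simp [hcl_eq s hs]
  have hβeq : ∀ s ∈ Icc (0:ℝ) 1, βe s = β s := fun s hs => by rw [hβe_def]; simp [hcl_eq s hs]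
  set μ : Measure Ω := volume with hμ_def
  set ν : Measure ℝ := volume.restrict (Ioc (0:ℝ) 1) with hν_def
  have hν_univ : ν univ = 1 := by
    rw [hν_def, Measure.restrict_apply_univ, Real.volume_Ioc]
    norm_num
  haveI : IsProbabilityMeasure ν := ⟨hν_univ⟩
  set F_V : Ω → ℝ → ℝ := fun ω t => (if t < V ω then (1:ℝ) else 0) * Y ω with hFV_def
  set F_U : Ω → ℝ → ℝ :=
    fun ω t => (if αe t + ∑ k, βe t k * X ω k < Y ω then (1:ℝ) else 0) * Y ω with hFU_def
  have hFVm : Measurable (Function.uncurry F_V) :=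
    (Measurable.ite (measurableSet_lt measurable_snd (hV.comp measurable_fst))
      measurable_const measurable_const).mul (hYm.comp measurable_fst)
  have hFUm : Measurable (Function.uncurry F_U) := by
    refine (Measurable.ite (measurableSet_lt ?_ (hYm.comp measurable_fst))
      measurable_const measurable_const).mul (hYm.comp measurable_fst)
    exact (hαe_cont.measurable.comp measurable_snd).add
      (Finset.measurable_sum _ fun k _ =>
        (((continuous_apply k).comp hβe_cont).measurable.comp measurable_snd).mul
          ((measurable_pi_apply k).comp (hX.comp measurable_fst)))
  -- integrability on the product
  have hmapfst : Measure.map Prod.fst (μ.prod ν) = μ := by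
    rw [Measure.map_fst_prod, hν_univ, one_smul]
  have hYfst : Integrable (fun p : Ω × ℝ => Y p.1) (μ.prod ν) := by
    have h1 : Integrable Y (Measure.map Prod.fst (μ.prod ν)) := by rw [hmapfst]; exact hY
    exact (integrable_map_measure h1.aestronglyMeasurable measurable_fst.aemeasurable).mp h1
  have hFVi : Integrable (Function.uncurry F_V) (μ.prod ν) := by
    refine hYfst.norm.mono' hFVm.aestronglyMeasurable (ae_of_all _ fun p => ?_)
    by_cases h : p.2 < V p.1 <;>
      simp [Function.uncurry, hFV_def, h, abs_nonneg, Real.norm_eq_abs, abs_mul, abs_le]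
  have hFUi : Integrable (Function.uncurry F_U) (μ.prod ν) := by
    refine hYfst.norm.mono' hFUm.aestronglyMeasurable (ae_of_all _ fun p => ?_)
    by_cases h : αe p.2 + ∑ k, βe p.2 k * X p.1 k < Y p.1 <;>
      simp [Function.uncurry, hFU_def, h, abs_nonneg, Real.norm_eq_abs, abs_mul, abs_le]
  -- V lands in [0,1] a.e.
  have hVmem : ∀ᵐ ω ∂μ, V ω ∈ Icc (0:ℝ) 1 := by
    rw [ae_iff]
    have : {ω | ¬ V ω ∈ Icc (0:ℝ) 1} = V ⁻¹' (Icc (0:ℝ) 1)ᶜ := rfl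
    rw [this, ← Measure.map_apply hV measurableSet_Icc.compl, hmap,
      Measure.restrict_apply measurableSet_Icc.compl]
    simp
  -- a.e. disintegration for V
  have hVline : ∀ᵐ ω ∂μ, V ω * Y ω = ∫ t, F_V ω t ∂ν := by
    filter_upwards [hVmem] with ω hω
    have h2 : ∫ t, F_V ω t ∂ν
        = (∫ t, (if t < V ω then (1:ℝ) else 0) ∂ν) * Y ω := integral_mul_const _ _
    have h3 : (fun t => if t < V ω then (1:ℝ) else 0)
        = (Iio (V ω)).indicator (fun _ => (1:ℝ)) := by
      funext t; by_cases h : t < V ω <;> simp [h, Set.indicator, mem_Iio]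
    have h4 : ν (Iio (V ω)) = ENNReal.ofReal (V ω) := by
      rw [hν_def, Measure.restrict_apply measurableSet_Iio]
      have : Iio (V ω) ∩ Ioc (0:ℝ) 1 = Ioo 0 (V ω) := by
        ext x
        simp only [mem_inter_iff, mem_Iio, mem_Ioc, mem_Ioo]
        exact ⟨fun h => ⟨h.2.1, h.1⟩, fun h => ⟨h.2, h.1, (h.2.le.trans hω.2)⟩⟩
      rw [this, Real.volume_Ioo, sub_zero]
    rw [h2, h3, integral_indicator_const _ measurableSet_Iio, measureReal_def, h4,
      ENNReal.toReal_ofReal hω.1, smul_eq_mul, mul_one]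
  -- disintegration for U
  have hUline : ∀ ω, U ω * Y ω = ∫ t, F_U ω t ∂ν := by
    intro ω
    have h1 : U ω = ∫ t, (if α t + ∑ k, β t k * X ω k < Y ω then (1:ℝ) else 0) ∂ν := by
      rw [hU ω, intervalIntegral.integral_of_le zero_le_one]
    have h2 : ∫ t, F_U ω t ∂ν
        = ∫ t in Ioc (0:ℝ) 1,
            (if α t + ∑ k, β t k * X ω k < Y ω then (1:ℝ) else 0) * Y ω := by
      refine setIntegral_congr_fun measurableSet_Ioc fun t ht => ?_
      have htI : t ∈ Icc (0:ℝ) 1 := ⟨ht.1.le, ht.2⟩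
      simp only [hFU_def, hαeq t htI, hβeq t htI]
    rw [h2, integral_mul_const, h1]
  -- component integrability of X
  have hXk : ∀ k, Integrable (fun ω => X ω k) := fun k =>
    hXi.norm.mono' ((measurable_pi_apply k).comp hX).aestronglyMeasurable
      (ae_of_all _ fun ω => norm_le_pi_norm (X ω) k)
  -- pointwise-in-t comparison
  have hcomp : ∀ᵐ t ∂ν, (∫ ω, F_V ω t ∂μ) ≤ ∫ ω, F_U ω t ∂μ := by
    filter_upwards [ae_restrict_mem measurableSet_Ioc] with t ht
    have htI : t ∈ Icc (0:ℝ) 1 := ⟨ht.1.le, ht.2⟩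
    set W : Ω → ℝ := fun ω => if t < V ω then (1:ℝ) else 0 with hW_def
    have hWm : Measurable W :=
      Measurable.ite (measurableSet_lt measurable_const hV) measurable_const measurable_const
    have hW01 : ∀ ω, W ω ∈ Icc (0:ℝ) 1 := by
      intro ω; by_cases h : t < V ω <;> simp [hW_def, h]
    have hWe : ∫ ω, W ω ∂μ = 1 - t := by
      have h3 : W = (V ⁻¹' Ioi t).indicator (fun _ => (1:ℝ)) := by
        funext ω; by_cases h : t < V ω <;>
          simp [hW_def, h, Set.indicator, mem_preimage, mem_Ioi]
      have h4 : μ (V ⁻¹' Ioi t) = ENNReal.ofReal (1 - t) := by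
        rw [← Measure.map_apply hV measurableSet_Ioi, hmap,
          Measure.restrict_apply measurableSet_Ioi]
        have : Ioi t ∩ Icc (0:ℝ) 1 = Ioc t 1 := by
          ext x
          simp only [mem_inter_iff, mem_Ioi, mem_Icc, mem_Ioc]
          exact ⟨fun h => ⟨h.1, h.2.2⟩, fun h => ⟨h.1, (ht.1.trans h.1).le, h.2⟩⟩
        rw [this, Real.volume_Ioc]
      rw [h3, integral_indicator_const _ (hV measurableSet_Ioi), measureReal_def, h4,
        ENNReal.toReal_ofReal (by linarith [htI.2]), smul_eq_mul, mul_one]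
    have hWX : ∀ k, ∫ ω, X ω k * W ω ∂μ = 0 := by
      intro k
      have hm : MeasurableSpace.comap V inferInstance ≤ _ := hV.comap_le
      haveI : SigmaFinite (μ.trim hm) := by
        haveI : IsFiniteMeasure (μ.trim hm) := isFiniteMeasure_trim hm
        infer_instance
      have hs0 : MeasurableSet[MeasurableSpace.comap V inferInstance] (V ⁻¹' Ioi t) :=
        ⟨Ioi t, measurableSet_Ioi, rfl⟩
      have e : ∫ ω, X ω k * W ω ∂μ = ∫ ω in V ⁻¹' Ioi t, X ω k ∂μ := by
        rw [← integral_indicator (hV measurableSet_Ioi)]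
        congr 1; funext ω
        by_cases h : t < V ω <;>
          simp [hW_def, h, Set.indicator, mem_preimage, mem_Ioi]
      rw [e, ← setIntegral_condExp hm (hXk k) hs0]
      have h0 : ∀ᵐ ω ∂μ.restrict (V ⁻¹' Ioi t),
          (μ[fun ω => X ω k|MeasurableSpace.comap V inferInstance]) ω = 0 :=
        ae_restrict_of_ae (hMI k)
      rw [integral_congr_ae h0]
      simp
    have hFUeq : ∀ ω, F_U ω t
        = (if Y ω > α t + ∑ k, β t k * X ω k then (1:ℝ) else 0) * Y ω := by
      intro ω; simp only [hFU_def, hαeq t htI, hβeq t htI]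
    calc ∫ ω, F_V ω t ∂μ = ∫ ω, W ω * Y ω ∂μ := rfl
      _ ≤ ∫ ω, (if Y ω > α t + ∑ k, β t k * X ω k then (1:ℝ) else 0) * Y ω ∂μ :=
          kb_opt X Y hX hYm hXi hY (α t) (β t) t (hne1 t htI) (hne2 t htI)
            W hWm hW01 hWe hWX
      _ = ∫ ω, F_U ω t ∂μ := by simp only [hFUeq]
  calc ∫ ω, V ω * Y ω ∂μ = ∫ ω, ∫ t, F_V ω t ∂ν ∂μ := integral_congr_ae hVline
    _ = ∫ t, ∫ ω, F_V ω t ∂μ ∂ν := integral_integral_swap hFVi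
    _ ≤ ∫ t, ∫ ω, F_U ω t ∂μ ∂ν :=
        integral_mono_ae hFVi.integral_prod_right hFUi.integral_prod_right hcomp
    _ = ∫ ω, ∫ t, F_U ω t ∂ν ∂μ := (integral_integral_swap hFUi).symm
    _ = ∫ ω, U ω * Y ω ∂μ := integral_congr_ae (ae_of_all _ fun ω => (hUline ω).symm)
end

section
/- The value of the correlation maximization problem with mean-independence constraint, sup{E[UY] : U ~ U([0,1]), E[X|U] = 0}, equals the value of the problem sup{E[∫₀¹ V_t Y dt]} over families (V_t)_{t∈[0,1]} of {0,1}-valued random variables, nonincreasing in t, with E[V_t] = 1−t and E[V_t X] = 0 for a.e. t. -/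
open MeasureTheory Set Filter Topology
open scoped ENNReal

set_option linter.unusedSectionVars false
set_option linter.unusedVariables false
set_option maxHeartbeats 1000000

section Aux

variable {Ω : Type*} [MeasureSpace Ω] [IsProbabilityMeasure (volume : Measure Ω)]

lemma zero_setIntegral_of_Ioi {U : Ω → ℝ} (hU : Measurable U) {f : Ω → ℝ}
    (hfm : Measurable f) (hfi : Integrable f)
    (h0 : ∀ t : ℝ, ∫ ω in {ω | t < U ω}, f ω = 0) (huniv : ∫ ω, f ω = 0) :
    ∀ B : Set ℝ, MeasurableSet B → ∫ ω in U ⁻¹' B, f ω = 0 := by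
  have hne : ∀ (g : Ω → ℝ), Integrable g → ∀ s : Set Ω,
      (∫⁻ ω in s, ENNReal.ofReal (g ω)) ≠ ∞ := by
    intro g hg s
    refine ne_top_of_le_ne_top hg.2.ne ?_
    refine le_trans (setLIntegral_le_lintegral _ _) (lintegral_mono fun ω => ?_)
    rw [← ofReal_norm]
    exact ENNReal.ofReal_le_ofReal (le_abs_self _)
  have hrepr : ∀ s : Set Ω, ∫ ω in s, f ω =
      (∫⁻ ω in s, ENNReal.ofReal (f ω)).toReal
        - (∫⁻ ω in s, ENNReal.ofReal (-f ω)).toReal := by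
    intro s
    exact integral_eq_lintegral_pos_part_sub_lintegral_neg_part hfi.integrableOn
  have hlin : ∀ s : Set Ω, ∫ ω in s, f ω = 0 →
      (∫⁻ ω in s, ENNReal.ofReal (f ω)) = ∫⁻ ω in s, ENNReal.ofReal (-f ω) := by
    intro s hs
    rw [hrepr s, sub_eq_zero] at hs
    exact (ENNReal.toReal_eq_toReal_iff' (hne f hfi s) (hne _ hfi.neg s)).mp hs
  set νp := Measure.map U (volume.withDensity fun ω => ENNReal.ofReal (f ω)) with hνp
  set νm := Measure.map U (volume.withDensity fun ω => ENNReal.ofReal (-f ω)) with hνm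
  have hνpB : ∀ B : Set ℝ, MeasurableSet B →
      νp B = ∫⁻ ω in U ⁻¹' B, ENNReal.ofReal (f ω) := by
    intro B hB
    rw [hνp, Measure.map_apply hU hB, withDensity_apply _ (hU hB)]
  have hνmB : ∀ B : Set ℝ, MeasurableSet B →
      νm B = ∫⁻ ω in U ⁻¹' B, ENNReal.ofReal (-f ω) := by
    intro B hB
    rw [hνm, Measure.map_apply hU hB, withDensity_apply _ (hU hB)]
  have hfinp : IsFiniteMeasure νp := by
    constructor
    rw [hνpB univ MeasurableSet.univ]
    simpa using (hne f hfi univ).lt_top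
  have heq : νp = νm := by
    refine ext_of_generate_finite (range Ioi)
      (BorelSpace.measurable_eq.trans (borel_eq_generateFrom_Ioi ℝ)) isPiSystem_Ioi
      ?_ ?_
    · rintro _ ⟨t, rfl⟩
      rw [hνpB _ measurableSet_Ioi, hνmB _ measurableSet_Ioi]
      have : U ⁻¹' Ioi t = {ω | t < U ω} := rfl
      rw [this]
      exact hlin _ (h0 t)
    · rw [hνpB _ MeasurableSet.univ, hνmB _ MeasurableSet.univ]
      simp only [preimage_univ]
      have := hlin univ (by rw [Measure.restrict_univ]; exact huniv)
      simpa [Measure.restrict_univ] using this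
  intro B hB
  rw [hrepr, sub_eq_zero]
  have : νp B = νm B := by rw [heq]
  rw [hνpB B hB, hνmB B hB] at this
  rw [this]

lemma condexp_zero_of_Ioi {U : Ω → ℝ} (hU : Measurable U) {f : Ω → ℝ}
    (hfm : Measurable f) (hfi : Integrable f)
    (h0 : ∀ t : ℝ, ∫ ω in {ω | t < U ω}, f ω = 0) (huniv : ∫ ω, f ω = 0) :
    (volume : Measure Ω)[f | MeasurableSpace.comap U inferInstance]
      =ᵐ[(volume : Measure Ω)] 0 := by
  have hm : MeasurableSpace.comap U inferInstance ≤ (inferInstance : MeasurableSpace Ω) :=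
    hU.comap_le
  haveI : SigmaFinite ((volume : Measure Ω).trim hm) := by infer_instance
  refine (ae_eq_condExp_of_forall_setIntegral_eq hm hfi ?_ ?_ ?_).symm
  · intro s _ _
    exact (integrable_zero _ _ _).integrableOn
  · rintro s ⟨B, hB, rfl⟩ _
    simp only [Pi.zero_apply, integral_zero]
    exact (zero_setIntegral_of_Ioi hU hfm hfi h0 huniv B hB).symm
  · exact StronglyMeasurable.aestronglyMeasurable stronglyMeasurable_zero

lemma dir1 {N : ℕ} (X : Ω → (Fin N → ℝ)) (Y : Ω → ℝ)
    (hX : Measurable X) (hYm : Measurable Y)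
    (hXi : Integrable X) (hY : Integrable Y)
    (hEX : ∫ ω, X ω = 0)
    (U : Ω → ℝ) (hU : Measurable U)
    (hmap : Measure.map U (volume : Measure Ω) = volume.restrict (Icc (0:ℝ) 1))
    (hce : ∀ k, (volume : Measure Ω)[(fun ω => X ω k)
        | MeasurableSpace.comap U inferInstance] =ᵐ[(volume : Measure Ω)] 0) :
    ∃ V : ℝ → Ω → ℝ,
        (∀ t, Measurable (V t)) ∧
        (∀ t ω, V t ω = 0 ∨ V t ω = 1) ∧
        (∀ s t : ℝ, s ≤ t → ∀ ω, V t ω ≤ V s ω) ∧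
        (∀ᵐ t ∂(volume.restrict (Icc (0:ℝ) 1)), (∫ ω, V t ω) = 1 - t) ∧
        (∀ᵐ t ∂(volume.restrict (Icc (0:ℝ) 1)), ∀ k, ∫ ω, V t ω * X ω k = 0) ∧
        (∫ ω, U ω * Y ω) = ∫ ω, (∫ t in (0:ℝ)..1, V t ω) * Y ω := by
  have hm : MeasurableSpace.comap U inferInstance ≤ (inferInstance : MeasurableSpace Ω) :=
    hU.comap_le
  haveI : SigmaFinite ((volume : Measure Ω).trim hm) := by infer_instance
  refine ⟨fun t ω => if t < U ω then 1 else 0, ?_, ?_, ?_, ?_, ?_, ?_⟩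
  · intro t
    exact Measurable.ite (measurableSet_lt measurable_const hU) measurable_const measurable_const
  · intro t ω
    by_cases h : t < U ω <;> simp [h]
  · intro s t hst ω
    dsimp only
    by_cases h1 : t < U ω
    · have h2 : s < U ω := lt_of_le_of_lt hst h1
      simp [h1, h2]
    · by_cases h2 : s < U ω <;> simp [h1, h2]
  · refine (ae_restrict_mem measurableSet_Icc).mono fun t ht => ?_
    have hind : (fun ω => if t < U ω then (1:ℝ) else 0)
        = Set.indicator (U ⁻¹' Ioi t) (1 : Ω → ℝ) := by
      funext ω
      by_cases h : t < U ω <;> simp [Set.indicator, h, mem_preimage, mem_Ioi]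
    rw [hind, integral_indicator_one (hU measurableSet_Ioi), measureReal_def,
      ← Measure.map_apply hU measurableSet_Ioi, hmap,
      Measure.restrict_apply measurableSet_Ioi]
    have hset : Ioi t ∩ Icc (0:ℝ) 1 = Ioc t 1 := by
      ext x
      simp only [mem_inter_iff, mem_Ioi, mem_Icc, mem_Ioc]
      constructor
      · rintro ⟨h1, h2, h3⟩; exact ⟨h1, h3⟩
      · rintro ⟨h1, h2⟩; exact ⟨h1, le_trans ht.1 h1.le, h2⟩
    rw [hset, Real.volume_Ioc, ENNReal.toReal_ofReal (by linarith [ht.2])]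
  · refine Filter.Eventually.of_forall fun t => fun k => ?_
    have hXik : Integrable (fun ω => X ω k) :=
      (ContinuousLinearMap.proj (R := ℝ) (φ := fun _ : Fin N => ℝ) k).integrable_comp hXi
    have hind : (fun ω => (if t < U ω then (1:ℝ) else 0) * X ω k)
        = Set.indicator (U ⁻¹' Ioi t) (fun ω => X ω k) := by
      funext ω
      by_cases h : t < U ω <;> simp [Set.indicator, h, mem_preimage, mem_Ioi]
    rw [hind, integral_indicator (hU measurableSet_Ioi)]
    have hsm : MeasurableSet[MeasurableSpace.comap U inferInstance] (U ⁻¹' Ioi t) :=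
      ⟨Ioi t, measurableSet_Ioi, rfl⟩
    have h1 := setIntegral_condExp hm hXik hsm
    have h2 : ∫ ω in U ⁻¹' Ioi t,
        ((volume : Measure Ω)[(fun ω => X ω k) | MeasurableSpace.comap U inferInstance]) ω = 0 := by
      rw [setIntegral_congr_ae (hU measurableSet_Ioi) ((hce k).mono fun ω hω _ => hω)]
      simp
    rw [← h1, h2]
  · have haeU : ∀ᵐ ω ∂(volume : Measure Ω), U ω ∈ Icc (0:ℝ) 1 := by
      rw [ae_iff]
      have : {ω | ¬ U ω ∈ Icc (0:ℝ) 1} = U ⁻¹' (Icc (0:ℝ) 1)ᶜ := rfl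
      rw [this, ← Measure.map_apply hU measurableSet_Icc.compl, hmap,
        Measure.restrict_apply measurableSet_Icc.compl, compl_inter_self]
      exact measure_empty
    refine integral_congr_ae (haeU.mono fun ω hω => ?_)
    show U ω * Y ω = (∫ t in (0:ℝ)..1, if t < U ω then (1:ℝ) else 0) * Y ω
    congr 1
    rw [intervalIntegral.integral_of_le zero_le_one]
    have hind : (fun t => if t < U ω then (1:ℝ) else 0)
        = Set.indicator (Iio (U ω)) (1 : ℝ → ℝ) := by
      funext t
      by_cases h : t < U ω <;> simp [Set.indicator, h]
    rw [hind, integral_indicator_one measurableSet_Iio, measureReal_def,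
      Measure.restrict_apply measurableSet_Iio]
    have hset : Iio (U ω) ∩ Ioc (0:ℝ) 1 = Ioo 0 (U ω) := by
      ext x
      simp only [mem_inter_iff, mem_Iio, mem_Ioc, mem_Ioo]
      constructor
      · rintro ⟨h1, h2, h3⟩; exact ⟨h2, h1⟩
      · rintro ⟨h1, h2⟩; exact ⟨h2, h1, le_trans h2.le hω.2⟩
    rw [hset, Real.volume_Ioo, ENNReal.toReal_ofReal (by linarith [hω.1])]
    ring

section ccc

variable (V : ℝ → Ω → ℝ)

/-- right endpoint of the indicator family -/
noncomputable def cfun (ω : Ω) : ℝ :=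
  sSup ({0} ∪ {t ∈ Icc (0:ℝ) 1 | V t ω = 1})

variable {V}
variable (hVm : ∀ t, Measurable (V t))
    (hV01 : ∀ t ω, V t ω = 0 ∨ V t ω = 1)
    (hanti : ∀ s t : ℝ, s ≤ t → ∀ ω, V t ω ≤ V s ω)

lemma cfun_bddAbove (ω : Ω) : BddAbove ({0} ∪ {t ∈ Icc (0:ℝ) 1 | V t ω = 1}) := by
  refine ⟨1, ?_⟩
  rintro x (hx | hx)
  · simp at hx; simp [hx]
  · exact hx.1.2

lemma cfun_nonneg (ω : Ω) : 0 ≤ cfun V ω :=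
  le_csSup (cfun_bddAbove ω) (Or.inl rfl)

lemma cfun_le_one (ω : Ω) : cfun V ω ≤ 1 := by
  refine csSup_le ⟨0, Or.inl rfl⟩ ?_
  rintro x (hx | hx)
  · simp at hx; simp [hx]
  · exact hx.1.2

include hV01 hanti in
lemma V_eq_one_of_lt {t : ℝ} {ω : Ω} (ht : 0 ≤ t) (h : t < cfun V ω) : V t ω = 1 := by
  have hmem : (0:ℝ) ∈ ({0} ∪ {t ∈ Icc (0:ℝ) 1 | V t ω = 1}) := Or.inl rfl
  obtain ⟨r, hr, htr⟩ := exists_lt_of_lt_csSup ⟨0, hmem⟩ h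
  rcases hr with hr | hr
  · simp only [mem_singleton_iff] at hr
    exact absurd (hr ▸ htr) (not_lt.mpr ht)
  · have h1 : V r ω ≤ V t ω := hanti t r htr.le ω
    rcases hV01 t ω with h2 | h2
    · rw [hr.2, h2] at h1; linarith
    · exact h2

include hV01 in
lemma le_cfun_of_V_eq_one {t : ℝ} {ω : Ω} (ht : t ∈ Icc (0:ℝ) 1) (h : V t ω = 1) :
    t ≤ cfun V ω :=
  le_csSup (cfun_bddAbove ω) (Or.inr ⟨ht, h⟩)

include hV01 in
lemma V_eq_zero_of_gt {t : ℝ} {ω : Ω} (ht : t ∈ Icc (0:ℝ) 1) (h : cfun V ω < t) :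
    V t ω = 0 := by
  rcases hV01 t ω with h2 | h2
  · exact h2
  · exact absurd (le_cfun_of_V_eq_one hV01 ht h2) (not_le.mpr h)

include hVm hV01 hanti in
lemma cfun_measurable : Measurable (cfun V) := by
  apply measurable_of_Ioi
  intro a
  by_cases ha : 0 ≤ a
  · have : cfun V ⁻¹' Ioi a
        = ⋃ (q : ℚ), ⋃ (_ : a < (q:ℝ) ∧ (q:ℝ) ≤ 1), {ω | V (q:ℝ) ω = 1} := by
      ext ω
      simp only [mem_preimage, mem_Ioi, mem_iUnion, mem_setOf_eq]
      constructor
      · intro h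
        have hmem : (0:ℝ) ∈ ({0} ∪ {t ∈ Icc (0:ℝ) 1 | V t ω = 1}) := Or.inl rfl
        obtain ⟨r, hr, har⟩ := exists_lt_of_lt_csSup ⟨0, hmem⟩ h
        rcases hr with hr | hr
        · simp only [mem_singleton_iff] at hr
          exact absurd (hr ▸ har) (not_lt.mpr ha)
        · obtain ⟨q, hq1, hq2⟩ := exists_rat_btwn har
          refine ⟨q, ⟨hq1, le_trans hq2.le hr.1.2⟩, ?_⟩
          have h1 : V r ω ≤ V (q:ℝ) ω := hanti _ r hq2.le ω
          rcases hV01 (q:ℝ) ω with h2 | h2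
          · rw [hr.2, h2] at h1; linarith
          · exact h2
      · rintro ⟨q, ⟨hq1, hq2⟩, hq3⟩
        have hq0 : (0:ℝ) ≤ q := le_trans ha hq1.le
        exact lt_of_lt_of_le hq1 (le_cfun_of_V_eq_one hV01 ⟨hq0, hq2⟩ hq3)
    rw [this]
    exact MeasurableSet.iUnion fun q => MeasurableSet.iUnion fun _ =>
      hVm (q:ℝ) (measurableSet_singleton 1)
  · have : cfun V ⁻¹' Ioi a = univ := by
      refine eq_univ_of_forall fun ω => ?_
      exact lt_of_lt_of_le (lt_of_not_ge ha) (cfun_nonneg ω)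
    rw [this]
    exact MeasurableSet.univ

include hVm hV01 hanti in
lemma integral_V_eq_cfun (ω : Ω) : (∫ t in (0:ℝ)..1, V t ω) = cfun V ω := by
  rw [intervalIntegral.integral_of_le zero_le_one]
  have hae : ∀ᵐ t ∂(volume.restrict (Ioc (0:ℝ) 1)),
      V t ω = (Ioo (0:ℝ) (cfun V ω)).indicator (1 : ℝ → ℝ) t := by
    have hne : ∀ᵐ t ∂(volume.restrict (Ioc (0:ℝ) 1)), t ≠ cfun V ω := by
      refine ae_restrict_of_ae ?_
      rw [ae_iff]
      simp only [ne_eq, not_not]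
      have : {t : ℝ | t = cfun V ω} = {cfun V ω} := by ext x; simp
      rw [this]
      exact Real.volume_singleton
    filter_upwards [hne, ae_restrict_mem measurableSet_Ioc] with t hne ht
    rcases lt_or_gt_of_ne hne with h | h
    · rw [V_eq_one_of_lt hV01 hanti ht.1.le h]
      have : t ∈ Ioo (0:ℝ) (cfun V ω) := ⟨ht.1, h⟩
      simp [indicator_of_mem this]
    · rw [V_eq_zero_of_gt hV01 ⟨ht.1.le, ht.2⟩ h]
      have : t ∉ Ioo (0:ℝ) (cfun V ω) := fun hc => absurd hc.2 (not_lt.mpr h.le)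
      simp [indicator_of_notMem this]
  rw [integral_congr_ae hae, integral_indicator_one measurableSet_Ioo, measureReal_def,
    Measure.restrict_apply measurableSet_Ioo]
  have : Ioo (0:ℝ) (cfun V ω) ∩ Ioc 0 1 = Ioo 0 (cfun V ω) := by
    refine inter_eq_left.mpr fun x hx => ⟨hx.1, le_trans hx.2.le (cfun_le_one ω)⟩
  rw [this, Real.volume_Ioo, ENNReal.toReal_ofReal (by simpa using cfun_nonneg ω)]
  ring

end ccc

section law

variable {V : ℝ → Ω → ℝ}
variable (hVm : ∀ t, Measurable (V t))
    (hV01 : ∀ t ω, V t ω = 0 ∨ V t ω = 1)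
    (hanti : ∀ s t : ℝ, s ≤ t → ∀ ω, V t ω ≤ V s ω)

include hVm hV01 in
lemma vol_V_eq_one {s : ℝ} (hs : s ≤ 1) (hE : (∫ ω, V s ω) = 1 - s) :
    volume {ω | V s ω = 1} = ENNReal.ofReal (1 - s) := by
  have hset : MeasurableSet {ω | V s ω = 1} := hVm s (measurableSet_singleton 1)
  have hind : V s = Set.indicator {ω | V s ω = 1} (1 : Ω → ℝ) := by
    funext ω
    rcases hV01 s ω with h | h
    · rw [h]
      have : ω ∉ {ω | V s ω = 1} := by simp [h]
      simp [indicator_of_notMem this]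
    · rw [h]
      have : ω ∈ {ω | V s ω = 1} := h
      simp [indicator_of_mem this]
  rw [hind, integral_indicator_one hset, measureReal_def] at hE
  rw [← hE, ENNReal.ofReal_toReal (measure_ne_top _ _)]

lemma exists_good {P : ℝ → Prop} (hG : ∀ᵐ t ∂(volume.restrict (Icc (0:ℝ) 1)), P t)
    {a b : ℝ} (ha : 0 ≤ a) (hab : a < b) (hb : b ≤ 1) : ∃ s ∈ Ioo a b, P s := by
  by_contra hcon
  push_neg at hcon
  have hsub : Ioo a b ⊆ {t | ¬ P t} := fun s hs => hcon s hs
  have h0 : volume.restrict (Icc (0:ℝ) 1) {t | ¬ P t} = 0 := hG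
  have hle : volume.restrict (Icc (0:ℝ) 1) (Ioo a b) = 0 :=
    le_antisymm (h0 ▸ measure_mono hsub) (zero_le)
  rw [Measure.restrict_apply measurableSet_Ioo] at hle
  have : Ioo a b ∩ Icc 0 1 = Ioo a b :=
    inter_eq_left.mpr fun x hx => ⟨le_trans ha hx.1.le, le_trans hx.2.le hb⟩
  rw [this, Real.volume_Ioo] at hle
  have : (0:ℝ) < b - a := by linarith
  simp [ENNReal.ofReal_eq_zero] at hle
  linarith

include hVm hV01 hanti in
lemma vol_cfun_gt (hE : ∀ᵐ t ∂(volume.restrict (Icc (0:ℝ) 1)), (∫ ω, V t ω) = 1 - t)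
    {t : ℝ} (ht : t ∈ Ico (0:ℝ) 1) :
    volume {ω | t < cfun V ω} = ENNReal.ofReal (1 - t) := by
  have hmeas : MeasurableSet {ω | t < cfun V ω} := by
    have : {ω | t < cfun V ω} = cfun V ⁻¹' Ioi t := rfl
    rw [this]
    exact (cfun_measurable hVm hV01 hanti) measurableSet_Ioi
  have hfin : volume {ω | t < cfun V ω} ≠ ∞ := measure_ne_top _ _
  set q : ℝ := (volume {ω | t < cfun V ω}).toReal with hq
  have hq1 : q ≤ 1 := by
    have hle1 : volume {ω | t < cfun V ω} ≤ (1:ℝ≥0∞) := prob_le_one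
    have := ENNReal.toReal_mono ENNReal.one_ne_top hle1
    simpa [hq] using this
  have hupper : q ≤ 1 - t := by
    rcases eq_or_lt_of_le ht.1 with h0 | h0
    · rw [← h0]; simpa using hq1
    · refine le_of_forall_pos_le_add fun ε hε => ?_
      obtain ⟨s, hs1, hs2⟩ := exists_good hE (a := max 0 (t - ε)) (b := t)
        (le_max_left _ _) (max_lt h0 (by linarith)) (le_of_lt ht.2)
      have hsub : {ω | t < cfun V ω} ⊆ {ω | V s ω = 1} := by
        intro ω hω
        exact V_eq_one_of_lt hV01 hanti (le_trans (le_max_left _ _) hs1.1.le)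
          (lt_trans hs1.2 hω)
      have := measure_mono (μ := (volume : Measure Ω)) hsub
      rw [vol_V_eq_one hVm hV01 (le_trans hs1.2.le ht.2.le) hs2] at this
      have h2 : q ≤ 1 - s := by
        rw [hq]
        refine le_trans (ENNReal.toReal_mono ENNReal.ofReal_ne_top this) ?_
        rw [ENNReal.toReal_ofReal (by linarith [hs1.2, ht.2] : (0:ℝ) ≤ 1 - s)]
      have h3 : t - ε ≤ s := le_trans (le_max_right 0 (t - ε)) hs1.1.le
      linarith
  have hlower : 1 - t ≤ q := by
    refine le_of_forall_pos_le_add fun ε hε => ?_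
    obtain ⟨s, hs1, hs2⟩ := exists_good hE (a := t) (b := min (t + ε) 1)
      ht.1 (lt_min (by linarith) ht.2) (min_le_right _ _)
    have hs01 : s ∈ Icc (0:ℝ) 1 :=
      ⟨le_trans ht.1 hs1.1.le, le_trans hs1.2.le (min_le_right _ _)⟩
    have hsub : {ω | V s ω = 1} ⊆ {ω | t < cfun V ω} := by
      intro ω hω
      exact lt_of_lt_of_le hs1.1 (le_cfun_of_V_eq_one hV01 hs01 hω)
    have hm := measure_mono (μ := (volume : Measure Ω)) hsub
    rw [vol_V_eq_one hVm hV01 hs01.2 hs2] at hm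
    have h2 : 1 - s ≤ q := by
      rw [hq]
      have := ENNReal.toReal_mono hfin hm
      rwa [ENNReal.toReal_ofReal (by linarith [hs01.2] : (0:ℝ) ≤ 1 - s)] at this
    have h3 : s ≤ t + ε := le_trans hs1.2.le (min_le_left _ _)
    linarith
  have hqeq : q = 1 - t := le_antisymm hupper hlower
  rw [← ENNReal.ofReal_toReal hfin, ← hq, hqeq]

include hVm hV01 hanti in
lemma map_cfun (hE : ∀ᵐ t ∂(volume.restrict (Icc (0:ℝ) 1)), (∫ ω, V t ω) = 1 - t) :
    Measure.map (cfun V) (volume : Measure Ω) = volume.restrict (Icc (0:ℝ) 1) := by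
  have hcm := cfun_measurable hVm hV01 hanti
  haveI : IsFiniteMeasure (Measure.map (cfun V) (volume : Measure Ω)) := by
    constructor
    rw [Measure.map_apply hcm MeasurableSet.univ]
    simp
  refine ext_of_generate_finite (range Ioi)
    (BorelSpace.measurable_eq.trans (borel_eq_generateFrom_Ioi ℝ)) isPiSystem_Ioi ?_ ?_
  · rintro _ ⟨t, rfl⟩
    rw [Measure.map_apply hcm measurableSet_Ioi,
      Measure.restrict_apply measurableSet_Ioi]
    by_cases ht0 : 0 ≤ t
    · have hset : Ioi t ∩ Icc (0:ℝ) 1 = Ioc t 1 := by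
        ext x
        simp only [mem_inter_iff, mem_Ioi, mem_Icc, mem_Ioc]
        constructor
        · rintro ⟨h1, h2, h3⟩; exact ⟨h1, h3⟩
        · rintro ⟨h1, h2⟩; exact ⟨h1, le_trans ht0 h1.le, h2⟩
      rw [hset, Real.volume_Ioc]
      by_cases ht1 : t < 1
      · exact vol_cfun_gt hVm hV01 hanti hE ⟨ht0, ht1⟩
      · have h1 : cfun V ⁻¹' Ioi t = ∅ := by
          refine eq_empty_of_forall_notMem fun ω hω => ?_
          simp only [mem_preimage, mem_Ioi] at hω
          exact absurd hω (not_lt.mpr (le_trans (cfun_le_one ω) (not_lt.mp ht1)))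
        rw [h1]
        simp [ENNReal.ofReal_eq_zero.mpr (by linarith [not_lt.mp ht1] : 1 - t ≤ 0)]
    · have h1 : cfun V ⁻¹' Ioi t = univ := by
        refine eq_univ_of_forall fun ω => ?_
        exact lt_of_lt_of_le (lt_of_not_ge ht0) (cfun_nonneg ω)
      have h2 : Ioi t ∩ Icc (0:ℝ) 1 = Icc 0 1 := by
        refine inter_eq_right.mpr fun x hx => lt_of_lt_of_le (lt_of_not_ge ht0) hx.1
      rw [h1, h2, Real.volume_Icc]
      simp
  · rw [Measure.map_apply hcm MeasurableSet.univ,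
      Measure.restrict_apply MeasurableSet.univ]
    simp [Real.volume_Icc]

end law

section thresh

variable {V : ℝ → Ω → ℝ}
variable (hVm : ∀ t, Measurable (V t))
    (hV01 : ∀ t ω, V t ω = 0 ∨ V t ω = 1)
    (hanti : ∀ s t : ℝ, s ≤ t → ∀ ω, V t ω ≤ V s ω)

include hVm hV01 hanti in
lemma setIntegral_cfun_gt_zero
    (hE : ∀ᵐ t ∂(volume.restrict (Icc (0:ℝ) 1)), (∫ ω, V t ω) = 1 - t)
    {f : Ω → ℝ} (hfm : Measurable f) (hfi : Integrable f)
    (hf0 : ∫ ω, f ω = 0)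
    (hVf : ∀ᵐ t ∂(volume.restrict (Icc (0:ℝ) 1)), ∫ ω, V t ω * f ω = 0) :
    ∀ t : ℝ, ∫ ω in {ω | t < cfun V ω}, f ω = 0 := by
  have hcm := cfun_measurable hVm hV01 hanti
  have hmeas : ∀ s : ℝ, MeasurableSet {ω | s < cfun V ω} := fun s =>
    hcm measurableSet_Ioi
  have hmap := map_cfun hVm hV01 hanti hE
  -- no atoms
  have hatom : ∀ s : ℝ, volume {ω | cfun V ω = s} = 0 := by
    intro s
    have : {ω | cfun V ω = s} = cfun V ⁻¹' {s} := rfl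
    rw [this, ← Measure.map_apply hcm (measurableSet_singleton s), hmap,
      Measure.restrict_apply (measurableSet_singleton s)]
    exact le_antisymm (le_trans (measure_mono inter_subset_left)
      (le_of_eq Real.volume_singleton)) (zero_le)
  -- at good points the set integral vanishes
  have hkey : ∀ s : ℝ, s ∈ Icc (0:ℝ) 1 → (∫ ω, V s ω * f ω) = 0 →
      ∫ ω in {ω | s < cfun V ω}, f ω = 0 := by
    intro s hs hVs
    have hae : (Set.indicator {ω | s < cfun V ω} f)
        =ᵐ[(volume : Measure Ω)] fun ω => V s ω * f ω := by
      have hne : ∀ᵐ ω ∂(volume : Measure Ω), cfun V ω ≠ s := by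
        rw [ae_iff]
        simpa using hatom s
      refine hne.mono fun ω hω => ?_
      rcases lt_or_gt_of_ne hω with h | h
      · have h0 : V s ω = 0 := V_eq_zero_of_gt hV01 hs h
        have : ω ∉ {ω | s < cfun V ω} := by simp [not_lt.mpr h.le]
        simp [indicator_of_notMem this, h0]
      · have h1 : V s ω = 1 := V_eq_one_of_lt hV01 hanti hs.1 h
        have : ω ∈ {ω | s < cfun V ω} := h
        simp [indicator_of_mem this, h1]
    rw [← integral_indicator (hmeas s), integral_congr_ae hae, hVs]
  intro t
  rcases lt_or_ge t 0 with ht0 | ht0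
  · have : {ω | t < cfun V ω} = univ :=
      eq_univ_of_forall fun ω => lt_of_lt_of_le ht0 (cfun_nonneg ω)
    rw [this, Measure.restrict_univ, hf0]
  rcases le_or_gt 1 t with ht1 | ht1
  · have : {ω | t < cfun V ω} = ∅ := by
      refine eq_empty_of_forall_notMem fun ω hω => ?_
      exact absurd (hω : t < cfun V ω) (not_lt.mpr (le_trans (cfun_le_one ω) ht1))
    rw [this]
    exact setIntegral_empty
  -- main case 0 ≤ t < 1
  have hGood := hE.and hVf
  have hs : ∀ n : ℕ, ∃ s ∈ Ioo t (min (t + 1/(n+1)) 1),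
      ((∫ ω, V s ω) = 1 - s ∧ (∫ ω, V s ω * f ω) = 0) := by
    intro n
    refine exists_good hGood ht0 (lt_min ?_ ht1) (min_le_right _ _)
    have : (0:ℝ) < 1/(n+1) := by positivity
    linarith
  choose s hs1 hs2 using hs
  have hsIcc : ∀ n, s n ∈ Icc (0:ℝ) 1 := fun n =>
    ⟨le_trans ht0 (hs1 n).1.le, le_trans (hs1 n).2.le (min_le_right _ _)⟩
  have hzero : ∀ n, ∫ ω in {ω | s n < cfun V ω}, f ω = 0 := fun n =>
    hkey (s n) (hsIcc n) (hs2 n).2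
  have htend : Tendsto (fun n : ℕ => ∫ ω, Set.indicator {ω | s n < cfun V ω} f ω)
      atTop (𝓝 (∫ ω, Set.indicator {ω | t < cfun V ω} f ω)) := by
    refine tendsto_integral_of_dominated_convergence (fun ω => |f ω|)
      (fun n => (hfm.indicator (hmeas (s n))).aestronglyMeasurable)
      hfi.abs (fun n => Eventually.of_forall fun ω => ?_)
      (Eventually.of_forall fun ω => ?_)
    · rw [Real.norm_eq_abs]
      have := norm_indicator_le_norm_self (s := {ω | s n < cfun V ω}) f ω
      simpa [Real.norm_eq_abs] using this
    · by_cases hω : t < cfun V ω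
      · have hev : ∀ᶠ n : ℕ in atTop,
            Set.indicator {ω | s n < cfun V ω} f ω = f ω := by
          obtain ⟨n0, hn0⟩ := exists_nat_one_div_lt (sub_pos.mpr hω)
          refine eventually_atTop.mpr ⟨n0, fun n hn => ?_⟩
          have h1 : s n < t + 1/(n+1) := lt_of_lt_of_le (hs1 n).2 (min_le_left _ _)
          have h2 : (1:ℝ)/(n+1) ≤ 1/(n0+1) := by
            apply one_div_le_one_div_of_le
            · positivity
            · exact add_le_add_left (Nat.cast_le.mpr hn) 1
          have hlt : s n < cfun V ω := by linarith
          exact indicator_of_mem (show ω ∈ {ω | s n < cfun V ω} from hlt) f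
        have hval : ({ω | t < cfun V ω}).indicator f ω = f ω := indicator_of_mem (show ω ∈ {ω | t < cfun V ω} from hω) f
        rw [hval]
        exact Tendsto.congr' (hev.mono fun n h => h.symm) tendsto_const_nhds
      · have hall : ∀ n : ℕ, Set.indicator {ω | s n < cfun V ω} f ω = 0 := by
          intro n
          have : ω ∉ {ω | s n < cfun V ω} := by
            simp only [mem_setOf_eq, not_lt]
            exact le_trans (not_lt.mp hω) (hs1 n).1.le
          exact indicator_of_notMem this f
        have hval : ({ω | t < cfun V ω}).indicator f ω = 0 :=
          indicator_of_notMem (by simpa using hω) f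
        rw [hval]
        have heq : (fun n : ℕ => ({ω | s n < cfun V ω}).indicator f ω)
            = fun _ => (0:ℝ) := funext hall
        rw [heq]
        exact tendsto_const_nhds
  have hconst : (fun n : ℕ => ∫ ω, Set.indicator {ω | s n < cfun V ω} f ω)
      = fun _ => (0:ℝ) := by
    funext n
    rw [integral_indicator (hmeas (s n))]
    exact hzero n
  rw [← integral_indicator (hmeas t)]
  have := htend
  rw [hconst] at this
  exact (tendsto_nhds_unique tendsto_const_nhds this).symm

end thresh

end Aux

open MeasureTheory Set

/-- The correlation maximization with mean-independence constraint has the same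
value as the `t`-dependent problem over nonincreasing families of indicator-valued
variables `V_t ∈ {0,1}` with `E[V_t] = 1−t`, `E[V_t X] = 0`. -/
theorem stmt13 {Ω : Type*} [MeasureSpace Ω]
    [IsProbabilityMeasure (volume : Measure Ω)]
    {N : ℕ} (X : Ω → (Fin N → ℝ)) (Y : Ω → ℝ)
    (hX : Measurable X) (hYm : Measurable Y)
    (hXi : Integrable X) (hY : Integrable Y)
    (hEX : ∫ ω, X ω = 0) :
    sSup {r : ℝ | ∃ U : Ω → ℝ, Measurable U ∧
        Measure.map U (volume : Measure Ω) = volume.restrict (Icc (0:ℝ) 1) ∧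
        (∀ k, (volume : Measure Ω)[(fun ω => X ω k)
            | MeasurableSpace.comap U inferInstance] =ᵐ[(volume : Measure Ω)] 0) ∧
        r = ∫ ω, U ω * Y ω}
    = sSup {r : ℝ | ∃ V : ℝ → Ω → ℝ,
        (∀ t, Measurable (V t)) ∧
        (∀ t ω, V t ω = 0 ∨ V t ω = 1) ∧
        (∀ s t : ℝ, s ≤ t → ∀ ω, V t ω ≤ V s ω) ∧
        (∀ᵐ t ∂(volume.restrict (Icc (0:ℝ) 1)), (∫ ω, V t ω) = 1 - t) ∧
        (∀ᵐ t ∂(volume.restrict (Icc (0:ℝ) 1)), ∀ k, ∫ ω, V t ω * X ω k = 0) ∧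
        r = ∫ ω, (∫ t in (0:ℝ)..1, V t ω) * Y ω} := by
  have hcomp : ∀ k : Fin N, Measurable (fun ω => X ω k) := fun k =>
    (measurable_pi_apply k).comp hX
  have hcompi : ∀ k : Fin N, Integrable (fun ω => X ω k) := fun k =>
    (ContinuousLinearMap.proj (R := ℝ) (φ := fun _ : Fin N => ℝ) k).integrable_comp hXi
  have hcomp0 : ∀ k : Fin N, ∫ ω, X ω k = 0 := by
    intro k
    have := ((ContinuousLinearMap.proj (R := ℝ) (φ := fun _ : Fin N => ℝ) k).integral_comp_comm
      hXi)
    simp only [ContinuousLinearMap.proj_apply] at this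
    rw [this, hEX]
    rfl
  congr 1
  ext r
  constructor
  · rintro ⟨U, hU, hmap, hce, rfl⟩
    obtain ⟨V, h1, h2, h3, h4, h5, h6⟩ := dir1 X Y hX hYm hXi hY hEX U hU hmap hce
    exact ⟨V, h1, h2, h3, h4, h5, h6⟩
  · rintro ⟨V, hVm, hV01, hanti, hE, hEX0, rfl⟩
    have hcm := cfun_measurable hVm hV01 hanti
    refine ⟨cfun V, hcm, map_cfun hVm hV01 hanti hE, ?_, ?_⟩
    · intro k
      refine condexp_zero_of_Ioi hcm (hcomp k) (hcompi k) ?_ (hcomp0 k)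
      exact setIntegral_cfun_gt_zero hVm hV01 hanti hE (hcomp k) (hcompi k) (hcomp0 k)
        (hEX0.mono fun t h => h k)
    · have heq : (fun ω => (∫ t in (0:ℝ)..1, V t ω) * Y ω)
          = fun ω => cfun V ω * Y ω := by
        funext ω
        rw [integral_V_eq_cfun hVm hV01 hanti]
      rw [heq]
end
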